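/- arXiv:nlin/0306003 — 12 statements merged into one kernel-verified Lean document; each statement's English description precedes it below -/
import Mathlib

section
/- Let τ_M be the M×M Hankel determinant of x-derivatives of f, i.e. τ_M(x,y) = det(A) where A is the M×M matrix with (a,b)-entry (0 ≤ a,b ≤ M−1) equal to ∂^{a+b} f/∂x^{a+b}(x,y) = Σ_{i=1}^N (−k_i)^{a+b} exp(θ_i(x,y)). Then for every 1 ≤ M ≤ N and all (x,y), τ_M(x,y) = Σ_{1 ≤ i_1 < i_2 < ⋯ < i_M ≤ N} Δ(i_1,…,i_M) · exp(θ_{i_1}(x,y) + ⋯ + θ_{i_M}(x,y)), where Δ(i_1,…,i_M) = Π_{1 ≤ j < l ≤ M} (k_{i_j} − k_{i_l})². -/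
/-!
Write `v i = -k i` and `c i = exp (θ i x y)`. The Hankel matrix factors as `V * diag c * Vᵀ`
with `V` the `M × N` Vandermonde matrix `(v i ^ a)`, so by the Cauchy–Binet formula its
determinant is a sum over `M`-element subsets `S`, the term of `S` being the squared
Vandermonde determinant of `(v i)_{i ∈ S}` times `∏_{i ∈ S} c i`.

Cauchy–Binet is proved by expanding the determinant multilinearly in its rows: this gives a
sum over tuples of indices, the non-injective tuples contribute nothing (repeated rows), and
every injective tuple is uniquely a strictly increasing one composed with a permutation.
-/

open Finset Matrix

section Tuples

variable {ι β : Type*} [LinearOrder ι] {m : ℕ}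

theorem Tuple.sort_comp_perm_of_strictMono {s : Fin m → ι} (hs : StrictMono s)
    (σ : Equiv.Perm (Fin m)) : Tuple.sort (s ∘ σ) = σ⁻¹ := by
  refine (Tuple.eq_sort_iff.2 ⟨?_, fun i j hij heq => ?_⟩).symm
  · simpa [Function.comp_def] using hs.monotone
  · simp only [Equiv.Perm.coe_inv, Function.comp_apply, Equiv.apply_symm_apply] at heq
    exact absurd (hs.injective heq) hij.ne

open Classical in
theorem Finset.sum_injective_tuples_eq_sum_strictMono_sum_perm [AddCommMonoid β]
    (T : Finset ι) (F : (Fin m → ι) → β) :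
    ∑ r ∈ Fintype.piFinset (fun _ : Fin m => T) with Function.Injective r, F r
      = ∑ s ∈ Fintype.piFinset (fun _ : Fin m => T) with StrictMono s,
          ∑ σ : Equiv.Perm (Fin m), F (s ∘ σ) := by
  rw [← sum_product']
  refine sum_nbij' (fun r => (r ∘ Tuple.sort r, (Tuple.sort r)⁻¹)) (fun p => p.1 ∘ p.2)
    (fun r hr => ?_) (fun p hp => ?_) (fun r _ => ?_) (fun p hp => ?_) (fun r _ => ?_)
  · simp only [mem_filter, mem_product, Fintype.mem_piFinset, mem_univ,
      and_true] at hr ⊢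
    exact ⟨fun a => hr.1 _,
      (Tuple.monotone_sort r).strictMono_of_injective (hr.2.comp (Equiv.injective _))⟩
  · simp only [mem_filter, mem_product, Fintype.mem_piFinset, mem_univ,
      and_true] at hp ⊢
    exact ⟨fun a => hp.1 _, hp.2.injective.comp p.2.injective⟩
  · ext a
    simp
  · simp only [mem_product, mem_filter, mem_univ, and_true] at hp
    rw [Tuple.sort_comp_perm_of_strictMono hp.2]
    ext a <;> simp
  · simp [Function.comp_assoc]

open Classical in
theorem Finset.sum_strictMono_tuples_eq_sum_powersetCard [AddCommMonoid β] (T : Finset ι)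
    (G : Finset ι → β) :
    ∑ s ∈ Fintype.piFinset (fun _ : Fin m => T) with StrictMono s, G (univ.image s)
      = ∑ S ∈ T.powersetCard m, G S := by
  have hcard {s : Fin m → ι} (hs : StrictMono s) : (univ.image s).card = m := by
    rw [card_image_of_injective _ hs.injective, card_univ, Fintype.card_fin]
  refine sum_bij (fun s _ => univ.image s) (fun s hs => ?_) (fun s₁ hs₁ s₂ hs₂ h => ?_)
    (fun S hS => ?_) (fun _ _ => rfl)
  · simp only [mem_filter, Fintype.mem_piFinset] at hs
    exact mem_powersetCard.2 ⟨image_subset_iff.2 fun a _ => hs.1 a, hcard hs.2⟩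
  · simp only [mem_filter] at hs₁ hs₂
    have hmem (a : Fin m) : s₁ a ∈ univ.image s₂ := h ▸ mem_image_of_mem s₁ (mem_univ a)
    exact (orderEmbOfFin_unique (hcard hs₂.2) hmem hs₁.2).trans
      (orderEmbOfFin_unique (hcard hs₂.2) (fun a => mem_image_of_mem s₂ (mem_univ a)) hs₂.2).symm
  · obtain ⟨hST, hS⟩ := mem_powersetCard.1 hS
    refine ⟨S.orderEmbOfFin hS, ?_, image_orderEmbOfFin_univ S hS⟩
    simp only [mem_filter, Fintype.mem_piFinset]
    exact ⟨fun a => hST (orderEmbOfFin_mem S hS a), (S.orderEmbOfFin hS).strictMono⟩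

theorem StrictMono.prod_prod_Ioi_eq [CommMonoid β] {s : Fin m → ι} (hs : StrictMono s)
    (g : ι → ι → β) :
    ∏ a, ∏ b ∈ Ioi a, g (s a) (s b)
      = ∏ j ∈ univ.image s, ∏ l ∈ univ.image s with j < l, g j l := by
  rw [prod_image fun a _ b _ h => hs.injective h]
  refine prod_congr rfl fun a _ => ?_
  rw [filter_image, prod_image fun a _ b _ h => hs.injective h]
  congr 1
  ext b
  simp [hs.lt_iff_lt]

end Tuples

namespace Matrix

variable {R ι : Type*} [CommRing R] {m : ℕ}

theorem det_of_sum_mul_eq_sum_piFinset {n : Type*} [Fintype n] [DecidableEq n] (T : Finset ι)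
    (A : Matrix n ι R) (B : Matrix ι n R) :
    det (of fun a b => ∑ i ∈ T, A a i * B i b)
      = ∑ r ∈ Fintype.piFinset fun _ => T, (∏ a, A a (r a)) * det (B.submatrix r id) := by
  have hrows : (of fun a b => ∑ i ∈ T, A a i * B i b) = fun a => ∑ i ∈ T, A a i • B i := by
    ext a b
    simp [Finset.sum_apply]
  rw [det, hrows]
  refine (detRowAlternating.toMultilinearMap.map_sum_finset (fun a i => A a i • B i)
    (fun _ => T)).trans (sum_congr rfl fun r _ => ?_)
  exact detRowAlternating.map_smul_univ (fun a => A a (r a)) (fun a => B (r a))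

open Classical in
theorem det_of_sum_mul_eq_sum_strictMono [LinearOrder ι] (T : Finset ι)
    (A : Matrix (Fin m) ι R) (B : Matrix ι (Fin m) R) :
    det (of fun a b => ∑ i ∈ T, A a i * B i b)
      = ∑ s ∈ Fintype.piFinset (fun _ : Fin m => T) with StrictMono s,
          det (A.submatrix id s) * det (B.submatrix s id) := by
  have hvanish (r : Fin m → ι) (hr : ¬ Function.Injective r) : det (B.submatrix r id) = 0 := by
    obtain ⟨a, b, hab, hne⟩ := Function.not_injective_iff.1 hr
    exact det_zero_of_row_eq hne (by ext; simp [hab])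
  rw [det_of_sum_mul_eq_sum_piFinset, ← sum_filter_of_ne (p := Function.Injective)
      fun r _ h => by_contra fun hr => h (by rw [hvanish r hr, mul_zero]),
    sum_injective_tuples_eq_sum_strictMono_sum_perm]
  refine sum_congr rfl fun s _ => ?_
  have hA : det (A.submatrix id s)
      = ∑ σ : Equiv.Perm (Fin m), Equiv.Perm.sign σ * ∏ a, A a (s (σ a)) := by
    rw [← det_transpose, det_apply']
    rfl
  rw [hA, sum_mul]
  refine sum_congr rfl fun σ _ => ?_
  rw [show B.submatrix (s ∘ σ) id = (B.submatrix s id).submatrix σ id from rfl, det_permute]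
  simp only [Function.comp_apply]
  ring

theorem det_hankel_eq_sum_powersetCard [LinearOrder ι] (T : Finset ι) (v c : ι → R) :
    det (of fun a b : Fin m => ∑ i ∈ T, v i ^ ((a : ℕ) + (b : ℕ)) * c i)
      = ∑ S ∈ T.powersetCard m,
          (∏ j ∈ S, ∏ l ∈ S with j < l, (v l - v j) ^ 2) * ∏ i ∈ S, c i := by
  classical
  have hfactor : (of fun a b : Fin m => ∑ i ∈ T, v i ^ ((a : ℕ) + (b : ℕ)) * c i)
      = of fun a b : Fin m => ∑ i ∈ T, of (fun (a : Fin m) i => v i ^ (a : ℕ)) a i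
          * of (fun i (b : Fin m) => c i * v i ^ (b : ℕ)) i b := by
    ext a b
    exact sum_congr rfl fun i _ => by simp only [of_apply]; ring
  rw [hfactor, det_of_sum_mul_eq_sum_strictMono, ← sum_strictMono_tuples_eq_sum_powersetCard]
  refine sum_congr rfl fun s hs => ?_
  replace hs : StrictMono s := (mem_filter.1 hs).2
  have hA : (of fun (a : Fin m) i => v i ^ (a : ℕ)).submatrix id s = (vandermonde (v ∘ s))ᵀ :=
    rfl
  have hB : (of fun i (b : Fin m) => c i * v i ^ (b : ℕ)).submatrix s id
      = diagonal (c ∘ s) * vandermonde (v ∘ s) := by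
    ext a b
    simp [diagonal_mul]
  rw [hA, hB, det_transpose, det_mul, det_diagonal, det_vandermonde,
    ← hs.prod_prod_Ioi_eq (fun j l => (v l - v j) ^ 2), prod_image fun a _ b _ h => hs.injective h]
  simp only [Function.comp_apply, prod_pow]
  ring

end Matrix

theorem hankel_tau_sum_over_subsets_general
    (N : ℕ)
    (k : ℕ → ℝ)
    (θ : ℕ → ℝ → ℝ → ℝ)
    (M : ℕ) (x y : ℝ) :
    Matrix.det (Matrix.of fun a b : Fin M =>
        ∑ i ∈ Finset.Icc 1 N, (-(k i)) ^ ((a : ℕ) + (b : ℕ)) * Real.exp (θ i x y))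
      = ∑ S ∈ Finset.powersetCard M (Finset.Icc 1 N),
          (∏ j ∈ S, ∏ l ∈ S.filter (fun l => j < l), (k j - k l) ^ 2)
            * Real.exp (∑ i ∈ S, θ i x y) := by
  rw [det_hankel_eq_sum_powersetCard (Icc 1 N) (fun i => -k i) (fun i => Real.exp (θ i x y))]
  simp only [neg_sub_neg, Real.exp_sum]

/-- The Hankel determinant τ_M of x-derivatives of
`f(x,y) = Σ_{i=1}^N exp(θ_i(x,y))`, `θ_i(x,y) = -k_i x + k_i² y + θ_i⁰`,
equals the sum over M-element subsets {i₁<⋯<i_M} of {1,…,N} of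
`Δ(i₁,…,i_M) exp(θ_{i₁}+⋯+θ_{i_M})`, where Δ is the squared Vandermonde. -/
theorem hankel_tau_sum_over_subsets
    (N : ℕ) (hN : 1 ≤ N)
    (k θ0 : ℕ → ℝ)
    (θ : ℕ → ℝ → ℝ → ℝ)
    (hθ : ∀ i x y, θ i x y = -(k i) * x + (k i) ^ 2 * y + θ0 i)
    (M : ℕ) (hM1 : 1 ≤ M) (hMN : M ≤ N) (x y : ℝ) :
    Matrix.det (Matrix.of fun a b : Fin M =>
        ∑ i ∈ Finset.Icc 1 N, (-(k i)) ^ ((a : ℕ) + (b : ℕ)) * Real.exp (θ i x y))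
      = ∑ S ∈ Finset.powersetCard M (Finset.Icc 1 N),
          (∏ j ∈ S, ∏ l ∈ S.filter (fun l => j < l), (k j - k l) ^ 2)
            * Real.exp (∑ i ∈ S, θ i x y) :=
  hankel_tau_sum_over_subsets_general N k θ M x y
end

section
/- For 1 ≤ i < j ≤ N, the level of intersection σ_{i,j} := |{ l ∈ {1,…,N} : η_l(c_{i,j}) > η_i(c_{i,j}) }|, where c_{i,j} = k_i + k_j, equals N − 1 − (j − i). Consequently, for every 0 ≤ n ≤ N−2, the set of pairs with level n is I(n) = { (i, N − n + i − 1) : 1 ≤ i ≤ n+1 }, i.e. σ_{i,j} = n if and only if j = N − n + i − 1. -/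
/-- For 1 ≤ i < j ≤ N, the level of intersection
σ_{i,j} = |{l ∈ {1,…,N} : η_l(c_{i,j}) > η_i(c_{i,j})}| (with c_{i,j} = k_i + k_j)
equals N − 1 − (j − i); consequently for 0 ≤ n ≤ N−2, σ_{i,j} = n iff
j = N − n + i − 1. -/
theorem level_of_intersection
    (N : ℕ) (hN : 2 ≤ N)
    (k : ℕ → ℝ)
    (hk : ∀ a b, 1 ≤ a → a < b → b ≤ N → k a < k b)
    (η : ℕ → ℝ → ℝ)
    (hη : ∀ i c, η i c = k i * (k i - c))
    (i j : ℕ) (hi : 1 ≤ i) (hij : i < j) (hj : j ≤ N) :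
    ((Finset.Icc 1 N).filter (fun l => η i (k i + k j) < η l (k i + k j))).card
        = N - 1 - (j - i) ∧
    ∀ n : ℕ, n ≤ N - 2 →
      (((Finset.Icc 1 N).filter
          (fun l => η i (k i + k j) < η l (k i + k j))).card = n
        ↔ j = N - n + i - 1) := by
  have key : (Finset.Icc 1 N).filter (fun l => η i (k i + k j) < η l (k i + k j))
      = Finset.Icc 1 (i - 1) ∪ Finset.Icc (j + 1) N := by
    ext l
    simp only [Finset.mem_filter, Finset.mem_Icc, Finset.mem_union]
    constructor
    · rintro ⟨⟨hl1, hlN⟩, hlt⟩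
      rw [hη, hη] at hlt
      have hfac : 0 < (k l - k i) * (k l - k j) := by nlinarith
      by_contra hcon
      push_neg at hcon
      -- so i ≤ l ≤ j
      have hil : i ≤ l := by omega
      have hlj : l ≤ j := by omega
      rcases eq_or_lt_of_le hil with rfl | hil'
      · simp at hfac
      rcases eq_or_lt_of_le hlj with rfl | hlj'
      · simp at hfac
      have h1 : k i < k l := hk i l hi hil' (by omega)
      have h2 : k l < k j := hk l j (by omega) hlj' hj
      nlinarith
    · rintro (⟨hl1, hli⟩ | ⟨hjl, hlN⟩)
      · have hli' : l < i := by omega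
        have hlN : l ≤ N := by omega
        refine ⟨⟨hl1, hlN⟩, ?_⟩
        have h1 : k l < k i := hk l i hl1 hli' (by omega)
        have h2 : k l < k j := hk l j hl1 (by omega) hj
        rw [hη, hη]; nlinarith
      · refine ⟨⟨by omega, hlN⟩, ?_⟩
        have h1 : k i < k l := hk i l hi (by omega) hlN
        have h2 : k j < k l := hk j l (by omega) hjl hlN
        rw [hη, hη]; nlinarith
  have hdisj : Disjoint (Finset.Icc 1 (i - 1)) (Finset.Icc (j + 1) N) := by
    rw [Finset.disjoint_left]
    intro a ha hb
    simp only [Finset.mem_Icc] at ha hb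
    omega
  have hcard : ((Finset.Icc 1 N).filter
      (fun l => η i (k i + k j) < η l (k i + k j))).card = N - 1 - (j - i) := by
    rw [key, Finset.card_union_of_disjoint hdisj, Nat.card_Icc, Nat.card_Icc]
    omega
  exact ⟨hcard, fun n hn => by rw [hcard]; omega⟩
end

section
/- Let 1 ≤ M ≤ N−1, let 1 ≤ i ≤ N−M, and set c = k_i + k_{M+i}, S⁺ = {i, i+1, …, M+i−1} and S⁻ = {i+1, …, M+i}. Then Σ_{j∈S⁺} η_j(c) = Σ_{j∈S⁻} η_j(c), and for every M-element subset S of {1,…,N} with S ≠ S⁺ and S ≠ S⁻ one has Σ_{j∈S} η_j(c) > Σ_{j∈S⁺} η_j(c). That is, the minimum of S ↦ Σ_{j∈S} η_j(c) over M-element subsets is attained exactly at S⁺ and S⁻. -/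
/-!
Writing `c = k i + k (M + i)`, one has `η j c = (k j - k i) * (k j - k (M + i)) - k i * k (M + i)`,
so on `M`-element sets it suffices to minimise the sum of `f j = (k j - k i) * (k j - k (M + i))`.
By monotonicity `f` is negative on the `M - 1` indices strictly between `i` and `M + i`, vanishes
at `i` and `M + i`, and is positive at every other index. An `M`-set that misses an interior index
pays for it strictly, and one that contains all of them consists of them plus one more index,
which must be `i` or `M + i` for the sum not to increase.
-/

open Finset

section SumComparison

variable {α β : Type*} [DecidableEq α] [AddCommMonoid β] [PartialOrder β]
  [IsOrderedCancelAddMonoid β] {f : α → β} {S T : Finset α}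

theorem Finset.sum_lt_sum_of_not_subset (hT : ∀ j ∈ T, f j < 0) (hST : ∀ j ∈ S \ T, 0 ≤ f j)
    (hTS : ¬T ⊆ S) : ∑ j ∈ T, f j < ∑ j ∈ S, f j :=
  calc ∑ j ∈ T, f j = ∑ j ∈ T ∩ S, f j + ∑ j ∈ T \ S, f j := (sum_inter_add_sum_sdiff T S f).symm
    _ < ∑ j ∈ S ∩ T, f j + 0 := by
      rw [inter_comm]
      exact add_lt_add_right (sum_neg (fun j hj ↦ hT j (mem_sdiff.1 hj).1) (sdiff_nonempty.2 hTS)) _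
    _ ≤ ∑ j ∈ S ∩ T, f j + ∑ j ∈ S \ T, f j := add_le_add_right (sum_nonneg hST) _
    _ = ∑ j ∈ S, f j := sum_inter_add_sum_sdiff S T f

theorem Finset.sum_lt_sum_of_card_eq_add_one (hcard : #S = #T + 1) (hT : ∀ j ∈ T, f j < 0)
    (hST : ∀ j ∈ S \ T, 0 ≤ f j) (hinsert : ∀ x ∉ T, S = insert x T → 0 < f x) :
    ∑ j ∈ T, f j < ∑ j ∈ S, f j := by
  by_cases hTS : T ⊆ S
  · obtain ⟨x, hxT, rfl⟩ := exists_eq_insert_iff.2 ⟨hTS, hcard.symm⟩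
    rw [sum_insert hxT]
    exact lt_add_of_pos_left _ (hinsert x hxT rfl)
  · exact sum_lt_sum_of_not_subset hT hST hTS

end SumComparison

namespace StrictMonoOn

variable {α β : Type*} [LinearOrder α] [Ring β] [LinearOrder β] [IsStrictOrderedRing β]
  {k : α → β} {s : Set α} {a b j : α}

theorem sub_mul_sub_neg (hk : StrictMonoOn k s) (ha : a ∈ s) (hb : b ∈ s) (hj : j ∈ s)
    (haj : a < j) (hjb : j < b) : (k j - k a) * (k j - k b) < 0 :=
  mul_neg_of_pos_of_neg (sub_pos.2 (hk ha hj haj)) (sub_neg.2 (hk hj hb hjb))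

theorem sub_mul_sub_nonneg (hk : StrictMonoOn k s) (ha : a ∈ s) (hb : b ∈ s) (hj : j ∈ s)
    (hab : a ≤ b) (h : ¬(a < j ∧ j < b)) : 0 ≤ (k j - k a) * (k j - k b) := by
  rcases le_or_gt j a with hja | haj
  · have hjb := hja.trans hab
    exact mul_nonneg_of_nonpos_of_nonpos (sub_nonpos.2 ((hk.le_iff_le hj ha).2 hja))
      (sub_nonpos.2 ((hk.le_iff_le hj hb).2 hjb))
  · have hbj : b ≤ j := not_lt.1 fun hjb ↦ h ⟨haj, hjb⟩
    exact mul_nonneg (sub_nonneg.2 ((hk.le_iff_le ha hj).2 haj.le))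
      (sub_nonneg.2 ((hk.le_iff_le hb hj).2 hbj))

theorem sub_mul_sub_pos (hk : StrictMonoOn k s) (ha : a ∈ s) (hb : b ∈ s) (hj : j ∈ s)
    (hab : a ≤ b) (h : j < a ∨ b < j) : 0 < (k j - k a) * (k j - k b) := by
  rcases h with hja | hbj
  · exact mul_pos_of_neg_of_neg (sub_neg.2 (hk hj ha hja))
      (sub_neg.2 (hk hj hb (hja.trans_le hab)))
  · exact mul_pos (sub_pos.2 (hk ha hj (hab.trans_lt hbj))) (sub_pos.2 (hk hb hj hbj))

end StrictMonoOn

theorem Nat.Icc_sub_one_eq_insert_Ioo {a b : ℕ} (h : a < b) :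
    Icc a (b - 1) = insert a (Ioo a b) := by
  rw [Ioo_insert_left h]; ext; simp only [mem_Icc, mem_Ico]; omega

theorem Nat.Icc_add_one_eq_insert_Ioo {a b : ℕ} (h : a < b) :
    Icc (a + 1) b = insert b (Ioo a b) := by
  rw [Ioo_insert_right h]; ext; simp only [mem_Icc, mem_Ioc]; omega

theorem Finset.sum_mul_sub_add_eq {ι R : Type*} [CommRing R] (S : Finset ι) (k : ι → R) (x y : R) :
    ∑ j ∈ S, k j * (k j - (x + y)) = ∑ j ∈ S, (k j - x) * (k j - y) - #S * (x * y) := by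
  rw [← nsmul_eq_mul, ← sum_const, ← sum_sub_distrib]
  exact sum_congr rfl fun j _ ↦ by ring

theorem dominant_balance_min_general
    (N : ℕ)
    (k : ℕ → ℝ)
    (hk : ∀ a b, 1 ≤ a → a < b → b ≤ N → k a < k b)
    (η : ℕ → ℝ → ℝ)
    (hη : ∀ i c, η i c = k i * (k i - c))
    (M : ℕ) (hM1 : 1 ≤ M)
    (i : ℕ) (hi1 : 1 ≤ i) (hi2 : i ≤ N - M)
    (c : ℝ) (hc : c = k i + k (M + i)) :
    (∑ j ∈ Finset.Icc i (M + i - 1), η j c) = (∑ j ∈ Finset.Icc (i + 1) (M + i), η j c) ∧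
    ∀ S ∈ Finset.powersetCard M (Finset.Icc 1 N),
      S ≠ Finset.Icc i (M + i - 1) → S ≠ Finset.Icc (i + 1) (M + i) →
        (∑ j ∈ Finset.Icc i (M + i - 1), η j c) < ∑ j ∈ S, η j c := by
  have hkmono : StrictMonoOn k (Set.Icc 1 N) := fun a ha b hb hab ↦ hk a b ha.1 hab hb.2
  have hiN : i ∈ Set.Icc 1 N := ⟨hi1, by omega⟩
  have hMiN : M + i ∈ Set.Icc 1 N := ⟨by omega, by omega⟩
  have hplus := Nat.Icc_sub_one_eq_insert_Ioo (show i < M + i by omega)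
  have hminus := Nat.Icc_add_one_eq_insert_Ioo (show i < M + i by omega)
  have hcard_plus : #(Icc i (M + i - 1)) = M := by rw [Nat.card_Icc]; omega
  have hcard_minus : #(Icc (i + 1) (M + i)) = M := by rw [Nat.card_Icc]; omega
  set T := Ioo i (M + i)
  simp only [hη, hc, sum_mul_sub_add_eq]
  rw [hcard_plus, hcard_minus, hplus, hminus, sum_insert (by simp [T]),
    sum_insert (by simp [T]), sub_self, zero_mul, sub_self, mul_zero]
  refine ⟨rfl, fun S hS hS_plus hS_minus ↦ ?_⟩
  obtain ⟨hSN, hcard⟩ := mem_powersetCard.1 hS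
  have hmem (j : ℕ) (hj : j ∈ S) : j ∈ Set.Icc 1 N := by simpa using hSN hj
  rw [hcard, zero_add, sub_lt_sub_iff_right]
  refine sum_lt_sum_of_card_eq_add_one (by rw [hcard, Nat.card_Ioo]; omega) ?_ ?_ ?_
  · intro j hj
    obtain ⟨hij, hjM⟩ := mem_Ioo.1 hj
    exact hkmono.sub_mul_sub_neg hiN hMiN ⟨by omega, by omega⟩ hij hjM
  · intro j hj
    obtain ⟨hjS, hjT⟩ := mem_sdiff.1 hj
    exact hkmono.sub_mul_sub_nonneg hiN hMiN (hmem j hjS) (by omega) (by simpa [T] using hjT)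
  · rintro x hxT rfl
    have hxi : x ≠ i := by rintro rfl; exact hS_plus rfl
    have hxM : x ≠ M + i := by rintro rfl; exact hS_minus rfl
    have hx_out : ¬(i < x ∧ x < M + i) := by simpa [T] using hxT
    exact hkmono.sub_mul_sub_pos hiN hMiN (hmem x (mem_insert_self x T)) (by omega) (by omega)

/-- For 1 ≤ M ≤ N−1, 1 ≤ i ≤ N−M and c = k_i + k_{M+i}, with
S⁺ = {i,…,M+i−1} and S⁻ = {i+1,…,M+i}, the sums Σ_{j∈S⁺} η_j(c) and
Σ_{j∈S⁻} η_j(c) agree, and every other M-element subset S of {1,…,N} has a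
strictly larger sum: the minimum of S ↦ Σ_{j∈S} η_j(c) is attained exactly
at S⁺ and S⁻. -/
theorem dominant_balance_min
    (N : ℕ) (hN : 2 ≤ N)
    (k : ℕ → ℝ)
    (hk : ∀ a b, 1 ≤ a → a < b → b ≤ N → k a < k b)
    (η : ℕ → ℝ → ℝ)
    (hη : ∀ i c, η i c = k i * (k i - c))
    (M : ℕ) (hM1 : 1 ≤ M) (hM2 : M ≤ N - 1)
    (i : ℕ) (hi1 : 1 ≤ i) (hi2 : i ≤ N - M)
    (c : ℝ) (hc : c = k i + k (M + i)) :
    (∑ j ∈ Finset.Icc i (M + i - 1), η j c) = (∑ j ∈ Finset.Icc (i + 1) (M + i), η j c) ∧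
    ∀ S ∈ Finset.powersetCard M (Finset.Icc 1 N),
      S ≠ Finset.Icc i (M + i - 1) → S ≠ Finset.Icc (i + 1) (M + i) →
        (∑ j ∈ Finset.Icc i (M + i - 1), η j c) < ∑ j ∈ S, η j c :=
  dominant_balance_min_general N k hk η hη M hM1 i hi1 hi2 c hc
end

section
/- Let 1 ≤ M ≤ N−1, let 1 ≤ i ≤ M, and set c = k_i + k_{N−M+i}, S₁ = {1,…,i} ∪ {N−M+i+1, …, N} and S₂ = {1,…,i−1} ∪ {N−M+i, …, N}. Then Σ_{j∈S₁} η_j(c) = Σ_{j∈S₂} η_j(c), and for every M-element subset S of {1,…,N} with S ≠ S₁ and S ≠ S₂ one has Σ_{j∈S} η_j(c) < Σ_{j∈S₁} η_j(c). That is, the maximum of S ↦ Σ_{j∈S} η_j(c) over M-element subsets is attained exactly at S₁ and S₂. -/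
/-!
Since `c = k i + k n` with `n = N - M + i`, one has
`η j c = (k j - k i) * (k j - k n) - k i * k n`, so on `M`-element sets the sum of `η` differs
by a constant from the sum of the weight `(k j - k i) * (k j - k n)`. By monotonicity of `k`
this weight is positive off `[i, n]`, vanishes at `i` and `n`, and is negative strictly
between them. Exactly `M - 1` indices of `[1, N]` lie off `[i, n]`, so the best `M`-element
sets take all of them together with one of the two zeros `i`, `n`.
-/

open Finset

section

variable {ι β : Type*} [DecidableEq ι] [AddCommMonoid β] [LinearOrder β]
  [IsOrderedCancelAddMonoid β] {g : ι → β} {P S U : Finset ι}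

theorem Finset.sum_lt_sum_of_nonpos_of_pos (hS : ∀ j ∈ S \ P, g j ≤ 0)
    (hP : ∀ j ∈ P \ S, 0 < g j) (hPS : ¬P ⊆ S) : ∑ j ∈ S, g j < ∑ j ∈ P, g j :=
  calc ∑ j ∈ S, g j = ∑ j ∈ S ∩ P, g j + ∑ j ∈ S \ P, g j := (sum_inter_add_sum_sdiff S P g).symm
    _ ≤ ∑ j ∈ S ∩ P, g j := add_le_of_nonpos_right (sum_nonpos hS)
    _ < ∑ j ∈ S ∩ P, g j + ∑ j ∈ P \ S, g j :=
      lt_add_of_pos_right _ (sum_pos hP (sdiff_nonempty.2 hPS))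
    _ = ∑ j ∈ P, g j := by rw [inter_comm, sum_inter_add_sum_sdiff]

theorem Finset.sum_lt_sum_of_ne_insert {a b : ι} (hSU : S ⊆ U) (hcard : #S = #P + 1)
    (hpos : ∀ j ∈ P, 0 < g j) (hneg : ∀ j ∈ U \ P, j ≠ a → j ≠ b → g j < 0)
    (ha : g a = 0) (hb : g b = 0) (hSa : S ≠ insert a P) (hSb : S ≠ insert b P) :
    ∑ j ∈ S, g j < ∑ j ∈ P, g j := by
  by_cases hPS : P ⊆ S
  · obtain ⟨x, hx⟩ : ∃ x, S \ P = {x} := card_eq_one.1 (by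
      have := card_sdiff_add_card_eq_card hPS; omega)
    have hxSP : x ∈ S \ P := hx ▸ mem_singleton_self x
    have hS : S = insert x P := by rw [insert_eq, ← hx, sdiff_union_of_subset hPS]
    have hgx : g x < 0 := hneg x (sdiff_subset_sdiff hSU le_rfl hxSP)
      (by rintro rfl; exact hSa hS) (by rintro rfl; exact hSb hS)
    rw [hS, sum_insert (mem_sdiff.1 hxSP).2]
    exact add_lt_of_neg_left _ hgx
  · refine sum_lt_sum_of_nonpos_of_pos (fun j hj => ?_) (fun j hj => hpos j (mem_sdiff.1 hj).1) hPS
    by_cases hja : j = a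
    · exact (hja ▸ ha).le
    by_cases hjb : j = b
    · exact (hjb ▸ hb).le
    exact (hneg j (sdiff_subset_sdiff hSU le_rfl hj) hja hjb).le

end

theorem StrictMonoOn.sum_mul_sub_lt_of_ne_insert {α R : Type*} [LinearOrder α]
    [LocallyFiniteOrder α] [CommRing R] [LinearOrder R] [IsStrictOrderedRing R] {k : α → R}
    {U S : Finset α} {a b : α} (hk : StrictMonoOn k U) (ha : a ∈ U) (hb : b ∈ U) (hab : a ≤ b)
    (hSU : S ⊆ U) (hcard : #S = #(U \ Icc a b) + 1) (hSa : S ≠ insert a (U \ Icc a b))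
    (hSb : S ≠ insert b (U \ Icc a b)) :
    ∑ j ∈ S, (k j - k a) * (k j - k b) < ∑ j ∈ U \ Icc a b, (k j - k a) * (k j - k b) := by
  refine sum_lt_sum_of_ne_insert hSU hcard (fun j hj => ?_) (fun j hj hna hnb => ?_)
    (by simp) (by simp) hSa hSb
  · obtain ⟨hjU, hj⟩ := mem_sdiff.1 hj
    rcases lt_or_ge j a with hja | haj
    · exact mul_pos_of_neg_of_neg (sub_neg.2 (hk hjU ha hja))
        (sub_neg.2 (hk hjU hb (hja.trans_le hab)))
    · have hbj : b < j := lt_of_not_ge fun hjb => hj (mem_Icc.2 ⟨haj, hjb⟩)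
      exact mul_pos (sub_pos.2 (hk ha hjU (hab.trans_lt hbj))) (sub_pos.2 (hk hb hjU hbj))
  · obtain ⟨hjU, hj⟩ := mem_sdiff.1 hj
    have ⟨haj, hjb⟩ : a ≤ j ∧ j ≤ b := mem_Icc.1 (by_contra fun h => hj (mem_sdiff.2 ⟨hjU, h⟩))
    exact mul_neg_of_pos_of_neg (sub_pos.2 (hk ha hjU (haj.lt_of_ne' hna)))
      (sub_neg.2 (hk hjU hb (hjb.lt_of_ne hnb)))

theorem dominant_balance_max_general
    (N : ℕ)
    (k : ℕ → ℝ)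
    (hk : ∀ a b, 1 ≤ a → a < b → b ≤ N → k a < k b)
    (η : ℕ → ℝ → ℝ)
    (hη : ∀ i c, η i c = k i * (k i - c))
    (M : ℕ) (hM2 : M ≤ N - 1)
    (i : ℕ) (hi1 : 1 ≤ i) (hi2 : i ≤ M)
    (c : ℝ) (hc : c = k i + k (N - M + i)) :
    (∑ j ∈ Finset.Icc 1 i ∪ Finset.Icc (N - M + i + 1) N, η j c)
        = (∑ j ∈ Finset.Icc 1 (i - 1) ∪ Finset.Icc (N - M + i) N, η j c) ∧
    ∀ S ∈ Finset.powersetCard M (Finset.Icc 1 N),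
      S ≠ Finset.Icc 1 i ∪ Finset.Icc (N - M + i + 1) N →
      S ≠ Finset.Icc 1 (i - 1) ∪ Finset.Icc (N - M + i) N →
        (∑ j ∈ S, η j c) < ∑ j ∈ Finset.Icc 1 i ∪ Finset.Icc (N - M + i + 1) N, η j c := by
  set n := N - M + i
  set P := Icc 1 N \ Icc i n
  have hP : #P = M - 1 := by
    rw [card_sdiff_of_subset (Icc_subset_Icc hi1 (by omega)), Nat.card_Icc, Nat.card_Icc]; omega
  have hS₁ : Icc 1 i ∪ Icc (n + 1) N = insert i P := by
    ext; simp only [P, mem_union, mem_insert, mem_sdiff, mem_Icc]; omega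
  have hS₂ : Icc 1 (i - 1) ∪ Icc n N = insert n P := by
    ext; simp only [P, mem_union, mem_insert, mem_sdiff, mem_Icc]; omega
  have hiP : i ∉ P := by simp only [P, mem_sdiff, mem_Icc]; omega
  have hnP : n ∉ P := by simp only [P, mem_sdiff, mem_Icc]; omega
  have hsum (T : Finset ℕ) :
      ∑ j ∈ T, η j c = ∑ j ∈ T, (k j - k i) * (k j - k n) - #T * (k i * k n) := by
    rw [← nsmul_eq_mul, ← sum_const, ← sum_sub_distrib]
    exact sum_congr rfl fun j _ => by rw [hη, hc]; ring
  rw [hS₁, hS₂]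
  refine ⟨by simp [hsum, card_insert_of_notMem, sum_insert, hiP, hnP], fun S hS hne₁ hne₂ => ?_⟩
  obtain ⟨hSU, hScard⟩ := mem_powersetCard.1 hS
  have hk' : StrictMonoOn k (Icc 1 N : Finset ℕ) := fun a ha b hb hab =>
    hk a b (mem_Icc.1 ha).1 hab (mem_Icc.1 hb).2
  have hcard : #S = #P + 1 := by omega
  have hlt := hk'.sum_mul_sub_lt_of_ne_insert (mem_Icc.2 ⟨hi1, by omega⟩)
    (mem_Icc.2 ⟨by omega, by omega⟩) (by omega) hSU hcard hne₁ hne₂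
  rw [hsum, hsum, hcard, ← card_insert_of_notMem hiP, sum_insert hiP, sub_self, zero_mul, zero_add]
  exact sub_lt_sub_right hlt _

/-- For 1 ≤ M ≤ N−1, 1 ≤ i ≤ M and c = k_i + k_{N−M+i}, with
S₁ = {1,…,i} ∪ {N−M+i+1,…,N} and S₂ = {1,…,i−1} ∪ {N−M+i,…,N}, the sums
Σ_{j∈S₁} η_j(c) and Σ_{j∈S₂} η_j(c) agree, and every other M-element subset S
of {1,…,N} has a strictly smaller sum: the maximum of S ↦ Σ_{j∈S} η_j(c)
is attained exactly at S₁ and S₂. -/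
theorem dominant_balance_max
    (N : ℕ) (hN : 2 ≤ N)
    (k : ℕ → ℝ)
    (hk : ∀ a b, 1 ≤ a → a < b → b ≤ N → k a < k b)
    (η : ℕ → ℝ → ℝ)
    (hη : ∀ i c, η i c = k i * (k i - c))
    (M : ℕ) (hM1 : 1 ≤ M) (hM2 : M ≤ N - 1)
    (i : ℕ) (hi1 : 1 ≤ i) (hi2 : i ≤ M)
    (c : ℝ) (hc : c = k i + k (N - M + i)) :
    (∑ j ∈ Finset.Icc 1 i ∪ Finset.Icc (N - M + i + 1) N, η j c)
        = (∑ j ∈ Finset.Icc 1 (i - 1) ∪ Finset.Icc (N - M + i) N, η j c) ∧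
    ∀ S ∈ Finset.powersetCard M (Finset.Icc 1 N),
      S ≠ Finset.Icc 1 i ∪ Finset.Icc (N - M + i + 1) N →
      S ≠ Finset.Icc 1 (i - 1) ∪ Finset.Icc (N - M + i) N →
        (∑ j ∈ S, η j c) < ∑ j ∈ Finset.Icc 1 i ∪ Finset.Icc (N - M + i + 1) N, η j c :=
  dominant_balance_max_general N k hk η hη M hM2 i hi1 hi2 c hc
end

section
/- (Asymptotics as y → −∞.) Let 1 ≤ i ≤ N−M and c = k_i + k_{M+i}. Then: (a) for every ε > 0 there exists Ξ such that for every ξ ≤ −Ξ there exists Y with |w_1(c·y + ξ, y) − Σ_{j=i+1}^{M+i} k_j| < ε for all y ≤ −Y; (b) for every ε > 0 there exists Ξ such that for every ξ ≥ Ξ there exists Y with |w_1(c·y + ξ, y) − Σ_{j=i}^{M+i−1} k_j| < ε for all y ≤ −Y. In other words, along x = c y + ξ with y → −∞, w_1 → Σ_{j=i+1}^{M+i} k_j as ξ → −∞ and w_1 → Σ_{j=i}^{M+i−1} k_j as ξ → +∞. -/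
/-!
Along the line `x = c y + ξ` the exponent of the `S`-th term of `τ_M` is
`(∑ j ∈ S, (k_j² - c k_j)) y` plus a term independent of `y`. For `c = k_i + k_{M+i}` one has
`k_j² - c k_j = (k_j - k_i)(k_j - k_{M+i}) - k_i k_{M+i}`, and the product is negative for
`i < j < M + i`, zero for `j = i, M + i` and positive otherwise; hence among the `M`-subsets the
coefficient of `y` is minimal exactly at `{i, …, M+i-1}` and `{i+1, …, M+i}`. Since `w₁` is the
mean of `∑ j ∈ S, k_j` with weights `Δ(S) exp(∑ j ∈ S, θ_j)`, as `y → -∞` it tends to the mean over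
these two subsets only, whose weights have ratio a constant times `exp (-(k_{M+i} - k_i) ξ)`.
Letting `ξ → ∓∞` then selects one of the two subsets.
-/

open Filter Finset Real Topology

theorem prod_prod_sq_sub_pos {ι : Type*} [LinearOrder ι] {k : ι → ℝ} {S : Finset ι}
    (hk : Set.InjOn k S) : 0 < ∏ j ∈ S, ∏ l ∈ S.filter (fun l => j < l), (k j - k l) ^ 2 :=
  prod_pos fun _ hj => prod_pos fun _ hl =>
    sq_pos_of_ne_zero <| sub_ne_zero.2 fun h =>
      (mem_filter.1 hl).2.ne (hk hj (mem_filter.1 hl).1 h)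

theorem neg_deriv_div_sum_mul_exp {ι : Type*} (P : Finset ι) (C K : ι → ℝ) {u : ι → ℝ → ℝ}
    {x : ℝ} (hu : ∀ S ∈ P, HasDerivAt (u S) (-K S) x) :
    -deriv (fun x => ∑ S ∈ P, C S * exp (u S x)) x / ∑ S ∈ P, C S * exp (u S x) =
      P.centerMass (fun S => C S * exp (u S x)) K := by
  have hderiv := HasDerivAt.fun_sum fun S hS => ((hu S hS).exp.const_mul (C S))
  rw [hderiv.deriv, centerMass, smul_eq_mul, ← sum_neg_distrib, div_eq_inv_mul]
  exact congrArg _ (sum_congr rfl fun S _ => by rw [smul_eq_mul]; ring)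

theorem tendsto_centerMass {α ι E : Type*} [AddCommGroup E] [Module ℝ E] [TopologicalSpace E]
    [ContinuousAdd E] [ContinuousSMul ℝ E] {l : Filter α} {P : Finset ι} {w : α → ι → ℝ}
    {w₀ : ι → ℝ} (z : ι → E) (hw : ∀ S ∈ P, Tendsto (fun y => w y S) l (𝓝 (w₀ S)))
    (hw₀ : ∑ S ∈ P, w₀ S ≠ 0) :
    Tendsto (fun y => P.centerMass (w y) z) l (𝓝 (P.centerMass w₀ z)) :=
  ((tendsto_finsetSum P hw).inv₀ hw₀).smul
    (tendsto_finsetSum P fun S hS => (hw S hS).smul_const (z S))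

theorem tendsto_centerMass_exp_atBot {ι : Type*} {P Q : Finset ι} {C a t z : ι → ℝ} {m : ℝ}
    (hQP : Q ⊆ P) (hQ : Q.Nonempty) (hC : ∀ S ∈ Q, 0 < C S) (ha_eq : ∀ S ∈ Q, a S = m)
    (ha_lt : ∀ S ∈ P, S ∉ Q → m < a S) :
    Tendsto (fun y => P.centerMass (fun S => C S * exp (a S * y + t S)) z) atBot
      (𝓝 (Q.centerMass (fun S => C S * exp (t S)) z)) := by
  classical
  set w₀ : ι → ℝ := fun S => if S ∈ Q then C S * exp (t S) else 0
  have hscale : ∀ y, P.centerMass (fun S => C S * exp (a S * y + t S)) z =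
      P.centerMass (fun S => C S * exp ((a S - m) * y + t S)) z := fun y => by
    rw [← centerMass_smul_left P z (exp_ne_zero (-(m * y)))]
    congr 1
    funext S
    rw [Pi.smul_apply, smul_eq_mul, mul_left_comm, ← exp_add]
    ring_nf
  have hlim : ∀ S ∈ P, Tendsto (fun y => C S * exp ((a S - m) * y + t S)) atBot (𝓝 (w₀ S)) := by
    intro S hS
    by_cases hSQ : S ∈ Q
    · simp [w₀, hSQ, ha_eq S hSQ]
    · have hlin : Tendsto (fun y => (a S - m) * y + t S) atBot atBot :=
        tendsto_atBot_add_const_right _ _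
          (tendsto_id.const_mul_atBot (sub_pos.2 (ha_lt S hS hSQ)))
      simpa [w₀, hSQ] using (tendsto_exp_atBot.comp hlin).const_mul (C S)
  have hw₀ : ∑ S ∈ P, w₀ S ≠ 0 := by
    rw [sum_ite_mem, inter_eq_right.2 hQP]
    exact (sum_pos (fun S hS => mul_pos (hC S hS) (exp_pos _)) hQ).ne'
  simp_rw [hscale]
  rw [centerMass_congr_weights fun S hS => (if_pos hS).symm,
    centerMass_subset z hQP fun S _ hS => if_neg hS]
  exact tendsto_centerMass z hlim hw₀

theorem tendsto_centerMass_pair_exp_atBot {ι : Type*} [DecidableEq ι] {A B : ι}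
    {C a t z : ι → ℝ} (hA : 0 < C A) (hab : a A < a B) :
    Tendsto (fun y => ({A, B} : Finset ι).centerMass (fun S => C S * exp (a S * y + t S)) z)
      atBot (𝓝 (z A)) := by
  have h := tendsto_centerMass_exp_atBot (P := {A, B}) (Q := {A}) (C := C)
    (a := a) (t := t) (z := z) (m := a A) (by simp) (singleton_nonempty A) (by simpa)
    (fun S hS => by rw [mem_singleton.1 hS])
    (fun S hS hSA => by
      obtain rfl : S = B := by simpa [mem_singleton.not.1 hSA] using hS
      exact hab)
  rwa [centerMass_singleton A z (mul_pos hA (exp_pos _)).ne'] at h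

theorem eventually_exists_forall_abs_sub_lt {α : Type*} {l : Filter α} {f : α → ℝ → ℝ}
    {L : α → ℝ} {K ε : ℝ} (hf : ∀ ξ, Tendsto (f ξ) atBot (𝓝 (L ξ)))
    (hL : Tendsto L l (𝓝 K)) (hε : 0 < ε) :
    ∀ᶠ ξ in l, ∃ Y, ∀ y ≤ -Y, |f ξ y - K| < ε := by
  filter_upwards [hL (Metric.ball_mem_nhds K hε)] with ξ hξ
  obtain ⟨Y, hY⟩ := eventually_atBot.1 ((hf ξ).eventually (Metric.isOpen_ball.mem_nhds hξ))
  exact ⟨-Y, fun y hy => by simpa [Real.dist_eq] using hY y (by linarith)⟩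

theorem sum_lt_sum_of_ne_insert {ι : Type*} [DecidableEq ι] {g : ι → ℝ} {I S : Finset ι}
    {p q : ι} (hI : ∀ j ∈ I, g j < 0) (hp : g p = 0) (hq : g q = 0)
    (hS : ∀ j ∈ S, j ∉ I → j ≠ p → j ≠ q → 0 < g j) (hcard : #S = #I + 1)
    (hSp : S ≠ insert p I) (hSq : S ≠ insert q I) : ∑ j ∈ I, g j < ∑ j ∈ S, g j := by
  rw [← sum_inter_add_sum_sdiff I S, ← sum_inter_add_sum_sdiff S I, inter_comm]
  refine (add_lt_add_iff_left _).2 ?_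
  rcases (I \ S).eq_empty_or_nonempty with hIS | hIS
  · have hsub : I ⊆ S := sdiff_eq_empty_iff_subset.1 hIS
    obtain ⟨j, hj⟩ : ∃ j, S \ I = {j} := card_eq_one.1 (by rw [card_sdiff_of_subset hsub]; omega)
    have hjS : S = insert j I := by rw [← sdiff_union_of_subset hsub, hj, insert_eq]
    have hj' : j ∈ S \ I := hj ▸ mem_singleton_self j
    rw [hIS, hj, sum_empty, sum_singleton]
    exact hS j (mem_sdiff.1 hj').1 (mem_sdiff.1 hj').2 (by rintro rfl; exact hSp hjS)
      (by rintro rfl; exact hSq hjS)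
  · refine (sum_neg (fun j hj => hI j (mem_sdiff.1 hj).1) hIS).trans_le
      (sum_nonneg fun j hj => ?_)
    obtain ⟨hjS, hjI⟩ := mem_sdiff.1 hj
    by_cases hjp : j = p
    · exact (hjp ▸ hp).ge
    by_cases hjq : j = q
    · exact (hjq ▸ hq).ge
    exact (hS j hjS hjI hjp hjq).le

def phaseRate (k : ℕ → ℝ) (c : ℝ) (S : Finset ℕ) : ℝ := ∑ j ∈ S, (k j ^ 2 - c * k j)

theorem phaseRate_eq_sum_mul_sub (k : ℕ → ℝ) (p q : ℕ) (S : Finset ℕ) :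
    phaseRate k (k p + k q) S = ∑ j ∈ S, (k j - k p) * (k j - k q) - #S * (k p * k q) := by
  rw [phaseRate, ← nsmul_eq_mul, ← sum_const, ← sum_sub_distrib]
  exact sum_congr rfl fun j _ => by ring

theorem Icc_sub_one_eq_insert {i M : ℕ} (hM : 1 ≤ M) :
    Icc i (M + i - 1) = insert i (Icc (i + 1) (M + i - 1)) := by
  ext j; simp only [mem_insert, mem_Icc]; omega

theorem Icc_succ_eq_insert {i M : ℕ} (hM : 1 ≤ M) :
    Icc (i + 1) (M + i) = insert (M + i) (Icc (i + 1) (M + i - 1)) := by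
  ext j; simp only [mem_insert, mem_Icc]; omega

section PhaseRate

variable {k : ℕ → ℝ} {N M i : ℕ}

theorem sum_Icc_lt_sum_Icc_succ (hk : StrictMonoOn k (Set.Icc 1 N)) (hM : 1 ≤ M) (hi : 1 ≤ i)
    (hiN : M + i ≤ N) : ∑ j ∈ Icc i (M + i - 1), k j < ∑ j ∈ Icc (i + 1) (M + i), k j := by
  rw [Icc_sub_one_eq_insert hM, Icc_succ_eq_insert hM, sum_insert (by rw [mem_Icc]; omega),
    sum_insert (by rw [mem_Icc]; omega)]
  exact add_lt_add_left (hk ⟨hi, by omega⟩ ⟨by omega, hiN⟩ (by omega)) _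

theorem phaseRate_Icc_succ (hM : 1 ≤ M) :
    phaseRate k (k i + k (M + i)) (Icc (i + 1) (M + i)) =
      phaseRate k (k i + k (M + i)) (Icc i (M + i - 1)) := by
  rw [Icc_sub_one_eq_insert hM, Icc_succ_eq_insert hM, phaseRate, phaseRate,
    sum_insert (by rw [mem_Icc]; omega), sum_insert (by rw [mem_Icc]; omega)]
  ring

theorem phaseRate_Icc_lt (hk : StrictMonoOn k (Set.Icc 1 N)) (hM : 1 ≤ M) (hi : 1 ≤ i)
    (hiN : M + i ≤ N) {S : Finset ℕ} (hS : S ∈ powersetCard M (Icc 1 N))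
    (h₁ : S ≠ Icc i (M + i - 1)) (h₂ : S ≠ Icc (i + 1) (M + i)) :
    phaseRate k (k i + k (M + i)) (Icc i (M + i - 1)) < phaseRate k (k i + k (M + i)) S := by
  obtain ⟨hSN, hcard⟩ := mem_powersetCard.1 hS
  rw [phaseRate_eq_sum_mul_sub, phaseRate_eq_sum_mul_sub, hcard, Nat.card_Icc,
    Icc_sub_one_eq_insert hM, sum_insert_zero (by ring), show M + i - 1 + 1 - i = M by omega]
  rw [Icc_sub_one_eq_insert hM] at h₁
  rw [Icc_succ_eq_insert hM] at h₂
  refine sub_lt_sub_right (sum_lt_sum_of_ne_insert (fun j hj => ?_) (by ring) (by ring)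
    (fun j hj hjI hji hjM => ?_) (by rw [hcard, Nat.card_Icc]; omega) h₁ h₂) _
  · rw [mem_Icc] at hj
    exact mul_neg_of_pos_of_neg (sub_pos.2 (hk ⟨hi, by omega⟩ ⟨by omega, by omega⟩ (by omega)))
      (sub_neg.2 (hk ⟨by omega, by omega⟩ ⟨by omega, hiN⟩ (by omega)))
  · have hj' := mem_Icc.1 (hSN hj)
    rw [mem_Icc] at hjI
    rcases (by omega : j < i ∨ M + i < j) with hj | hj
    · exact mul_pos_of_neg_of_neg (sub_neg.2 (hk ⟨hj'.1, by omega⟩ ⟨hi, by omega⟩ hj))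
        (sub_neg.2 (hk ⟨hj'.1, by omega⟩ ⟨by omega, hiN⟩ (by omega)))
    · exact mul_pos (sub_pos.2 (hk ⟨hi, by omega⟩ ⟨by omega, hj'.2⟩ (by omega)))
        (sub_pos.2 (hk ⟨by omega, hiN⟩ ⟨by omega, hj'.2⟩ hj))

theorem tendsto_centerMass_phaseRate_atBot (hk : StrictMonoOn k (Set.Icc 1 N)) (hM : 1 ≤ M)
    (hi : 1 ≤ i) (hiN : M + i ≤ N) {C : Finset ℕ → ℝ} (hC₁ : 0 < C (Icc i (M + i - 1)))
    (hC₂ : 0 < C (Icc (i + 1) (M + i))) (t z : Finset ℕ → ℝ) :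
    Tendsto (fun y => (powersetCard M (Icc 1 N)).centerMass
        (fun S => C S * exp (phaseRate k (k i + k (M + i)) S * y + t S)) z) atBot
      (𝓝 (({Icc i (M + i - 1), Icc (i + 1) (M + i)} : Finset (Finset ℕ)).centerMass
        (fun S => C S * exp (t S)) z)) := by
  refine tendsto_centerMass_exp_atBot (m := phaseRate k (k i + k (M + i)) (Icc i (M + i - 1)))
    ?_ (insert_nonempty _ _) ?_ ?_ ?_
  · simp only [insert_subset_iff, singleton_subset_iff, mem_powersetCard, Nat.card_Icc]
    exact ⟨⟨Icc_subset_Icc hi (by omega), by omega⟩, Icc_subset_Icc (by omega) hiN, by omega⟩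
  · simpa [hC₂] using hC₁
  · simp [phaseRate_Icc_succ hM]
  · intro S hS hSQ
    simp only [mem_insert, mem_singleton, not_or] at hSQ
    exact phaseRate_Icc_lt hk hM hi hiN hS hSQ.1 hSQ.2

end PhaseRate

section Tau

variable {N M : ℕ} {k θ0 : ℕ → ℝ} {θ : ℕ → ℝ → ℝ → ℝ}

theorem sum_theta_line_eq (hθ : ∀ i x y, θ i x y = -(k i) * x + (k i) ^ 2 * y + θ0 i)
    (S : Finset ℕ) (c ξ y : ℝ) :
    ∑ j ∈ S, θ j (c * y + ξ) y =
      phaseRate k c S * y + (-(∑ j ∈ S, k j) * ξ + ∑ j ∈ S, θ0 j) := by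
  rw [phaseRate, sum_mul, neg_mul, sum_mul, ← sum_neg_distrib, ← sum_add_distrib,
    ← sum_add_distrib]
  exact sum_congr rfl fun j _ => by rw [hθ]; ring

theorem w1_eq_centerMass {Δ : Finset ℕ → ℝ} {τ w1 : ℝ → ℝ → ℝ}
    (hθ : ∀ i x y, θ i x y = -(k i) * x + (k i) ^ 2 * y + θ0 i)
    (hτ : ∀ x y, τ x y = ∑ S ∈ powersetCard M (Icc 1 N), Δ S * exp (∑ j ∈ S, θ j x y))
    (hw1 : ∀ x y, w1 x y = -(deriv (fun x' => τ x' y) x) / τ x y) (x y : ℝ) :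
    w1 x y = (powersetCard M (Icc 1 N)).centerMass (fun S => Δ S * exp (∑ j ∈ S, θ j x y))
      (fun S => ∑ j ∈ S, k j) := by
  simp only [hw1, hτ]
  refine neg_deriv_div_sum_mul_exp _ Δ _ (u := fun S x' => ∑ j ∈ S, θ j x' y) fun S _ => ?_
  rw [← sum_neg_distrib]
  refine HasDerivAt.fun_sum fun j _ => ?_
  simp only [hθ]
  simpa using ((hasDerivAt_id x).const_mul (-(k j))).add_const (k j ^ 2 * y + θ0 j)

end Tau

theorem w1_asymptotics_y_to_neg_infty_general
    (N : ℕ)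
    (M : ℕ) (hM1 : 1 ≤ M)
    (k θ0 : ℕ → ℝ)
    (hk : ∀ a b, 1 ≤ a → a < b → b ≤ N → k a < k b)
    (θ : ℕ → ℝ → ℝ → ℝ)
    (hθ : ∀ i x y, θ i x y = -(k i) * x + (k i) ^ 2 * y + θ0 i)
    (Δ : Finset ℕ → ℝ)
    (hΔ : ∀ S, Δ S = ∏ j ∈ S, ∏ l ∈ S.filter (fun l => j < l), (k j - k l) ^ 2)
    (τ : ℝ → ℝ → ℝ)
    (hτ : ∀ x y, τ x y = ∑ S ∈ Finset.powersetCard M (Finset.Icc 1 N),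
        Δ S * Real.exp (∑ j ∈ S, θ j x y))
    (w1 : ℝ → ℝ → ℝ)
    (hw1 : ∀ x y, w1 x y = -(deriv (fun x' => τ x' y) x) / τ x y)
    (i : ℕ) (hi1 : 1 ≤ i) (hi2 : i ≤ N - M)
    (c : ℝ) (hc : c = k i + k (M + i)) :
    (∀ ε > (0 : ℝ), ∃ Ξ : ℝ, ∀ ξ ≤ -Ξ, ∃ Y : ℝ, ∀ y ≤ -Y,
        |w1 (c * y + ξ) y - ∑ j ∈ Finset.Icc (i + 1) (M + i), k j| < ε) ∧
    (∀ ε > (0 : ℝ), ∃ Ξ : ℝ, ∀ ξ ≥ Ξ, ∃ Y : ℝ, ∀ y ≤ -Y,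
        |w1 (c * y + ξ) y - ∑ j ∈ Finset.Icc i (M + i - 1), k j| < ε) := by
  have hiN : M + i ≤ N := by omega
  have hk' : StrictMonoOn k (Set.Icc 1 N) := fun a ha b hb hab => hk a b ha.1 hab hb.2
  have hΔpos : ∀ {a b}, 1 ≤ a → b ≤ N → 0 < Δ (Icc a b) := fun ha hb =>
    hΔ _ ▸ prod_prod_sq_sub_pos (hk'.injOn.mono (by simpa using Set.Icc_subset_Icc ha hb))
  set L : ℝ → ℝ := fun ξ =>
    ({Icc i (M + i - 1), Icc (i + 1) (M + i)} : Finset (Finset ℕ)).centerMass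
      (fun S => Δ S * exp (-(∑ j ∈ S, k j) * ξ + ∑ j ∈ S, θ0 j)) (fun S => ∑ j ∈ S, k j)
  have hinner : ∀ ξ, Tendsto (fun y => w1 (c * y + ξ) y) atBot (𝓝 (L ξ)) := fun ξ => by
    simp_rw [w1_eq_centerMass hθ hτ hw1, sum_theta_line_eq hθ, hc]
    exact tendsto_centerMass_phaseRate_atBot hk' hM1 hi1 hiN (hΔpos hi1 (by omega))
      (hΔpos (by omega) hiN) _ _
  have hsum := sum_Icc_lt_sum_Icc_succ hk' hM1 hi1 hiN
  have hbot : Tendsto L atBot (𝓝 (∑ j ∈ Icc (i + 1) (M + i), k j)) := by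
    have h := tendsto_centerMass_pair_exp_atBot (B := Icc i (M + i - 1)) (C := Δ)
      (a := fun S => -(∑ j ∈ S, k j)) (t := fun S => ∑ j ∈ S, θ0 j) (z := fun S => ∑ j ∈ S, k j)
      (hΔpos (by omega) hiN) (neg_lt_neg hsum)
    rwa [pair_comm] at h
  have htop : Tendsto L atTop (𝓝 (∑ j ∈ Icc i (M + i - 1), k j)) := by
    simpa [L, Function.comp_def] using
      (tendsto_centerMass_pair_exp_atBot (hΔpos hi1 (by omega)) hsum).comp
        tendsto_neg_atTop_atBot
  refine ⟨fun ε hε => ?_, fun ε hε => ?_⟩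
  · obtain ⟨Ξ, hΞ⟩ := eventually_atBot.1 (eventually_exists_forall_abs_sub_lt hinner hbot hε)
    exact ⟨-Ξ, fun ξ hξ => hΞ ξ (by linarith)⟩
  · exact eventually_atTop.1 (eventually_exists_forall_abs_sub_lt hinner htop hε)

/-- asymptotics as y → −∞: along x = c y + ξ with
c = k_i + k_{M+i} (1 ≤ i ≤ N−M), the function w₁ = −(∂_x τ_M)/τ_M satisfies:
(a) w₁ → Σ_{j=i+1}^{M+i} k_j as ξ → −∞ and (b) w₁ → Σ_{j=i}^{M+i−1} k_j as
ξ → +∞, where the limits are taken as y → −∞. -/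
theorem w1_asymptotics_y_to_neg_infty
    (N : ℕ) (hN : 2 ≤ N)
    (M : ℕ) (hM1 : 1 ≤ M) (hM2 : M ≤ N - 1)
    (k θ0 : ℕ → ℝ)
    (hk : ∀ a b, 1 ≤ a → a < b → b ≤ N → k a < k b)
    (θ : ℕ → ℝ → ℝ → ℝ)
    (hθ : ∀ i x y, θ i x y = -(k i) * x + (k i) ^ 2 * y + θ0 i)
    (Δ : Finset ℕ → ℝ)
    (hΔ : ∀ S, Δ S = ∏ j ∈ S, ∏ l ∈ S.filter (fun l => j < l), (k j - k l) ^ 2)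
    (τ : ℝ → ℝ → ℝ)
    (hτ : ∀ x y, τ x y = ∑ S ∈ Finset.powersetCard M (Finset.Icc 1 N),
        Δ S * Real.exp (∑ j ∈ S, θ j x y))
    (w1 : ℝ → ℝ → ℝ)
    (hw1 : ∀ x y, w1 x y = -(deriv (fun x' => τ x' y) x) / τ x y)
    (i : ℕ) (hi1 : 1 ≤ i) (hi2 : i ≤ N - M)
    (c : ℝ) (hc : c = k i + k (M + i)) :
    (∀ ε > (0 : ℝ), ∃ Ξ : ℝ, ∀ ξ ≤ -Ξ, ∃ Y : ℝ, ∀ y ≤ -Y,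
        |w1 (c * y + ξ) y - ∑ j ∈ Finset.Icc (i + 1) (M + i), k j| < ε) ∧
    (∀ ε > (0 : ℝ), ∃ Ξ : ℝ, ∀ ξ ≥ Ξ, ∃ Y : ℝ, ∀ y ≤ -Y,
        |w1 (c * y + ξ) y - ∑ j ∈ Finset.Icc i (M + i - 1), k j| < ε) :=
  w1_asymptotics_y_to_neg_infty_general N M hM1 k θ0 hk θ hθ Δ hΔ τ hτ w1 hw1 i hi1 hi2 c hc
end

section
/- (Trivial limit along non-resonant lines.) Let c ∈ ℝ be such that c ≠ k_i + k_{M+i} for every i = 1, …, N−M. Then there is a unique M-element subset S* of {1,…,N} minimizing S ↦ Σ_{j∈S} η_j(c) over M-element subsets, where η_j(c) = k_j(k_j − c); and for every ξ ∈ ℝ, w_1(c·y + ξ, y) → Σ_{j∈S*} k_j as y → −∞ (a constant independent of ξ, so the solution u = −2 ∂w_1/∂x vanishes asymptotically in these directions). -/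
/-!
A minimiser of `S ↦ ∑ j ∈ S, k j * (k j - c)` over the `M`-subsets of `{1, …, N}` is a block of
consecutive indices: `t ↦ t * (t - c)` is convex and `k` is increasing, so a gap in `S` could be
filled by an exchange lowering the sum. Shifting the block `[i, i + M)` by one changes the sum by
`(k (i + M) - k i) * (k i + k (i + M) - c)`, whose sign is that of `k i + k (i + M) - c`; this is
increasing in `i` and never zero by non-resonance, so two different blocks cannot both be minimal.

Along `x = c * y + ξ` the exponent of the `S`-term of `τ` is `(∑ j ∈ S, η j c) * y + const`, so as
`y → -∞` the term of the minimiser dominates both `τ` and `-∂ₓτ`, and `w₁` tends to the frequency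
`∑ j ∈ S, k j` of that term.
-/

open Filter Finset Real Topology

lemma mul_sub_le_mul_sub_iff_of_lt {R : Type*} [CommRing R] [LinearOrder R]
    [IsStrictOrderedRing R] {r s : R} (c : R) (h : r < s) :
    r * (r - c) ≤ s * (s - c) ↔ c ≤ r + s := by
  have key : s * (s - c) - r * (r - c) = (s - r) * (r + s - c) := by ring
  rw [← sub_nonneg, key, mul_nonneg_iff_of_pos_left (sub_pos.2 h), sub_nonneg]

lemma mul_sub_lt_mul_sub_iff_of_lt {R : Type*} [CommRing R] [LinearOrder R]
    [IsStrictOrderedRing R] {r s : R} (c : R) (h : r < s) :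
    r * (r - c) < s * (s - c) ↔ c < r + s := by
  have key : s * (s - c) - r * (r - c) = (s - r) * (r + s - c) := by ring
  rw [← sub_pos, key, mul_pos_iff_of_pos_left (sub_pos.2 h), sub_pos]

lemma Finset.sum_Ico_succ_add {β : Type*} [AddCommGroup β] (f : ℕ → β) (i n : ℕ) :
    ∑ j ∈ Ico (i + 1) (i + 1 + n), f j = ∑ j ∈ Ico i (i + n), f j + f (i + n) - f i := by
  have top := sum_Ico_succ_top (Nat.le_add_right i n) f
  have bot := sum_eq_sum_Ico_succ_bot (Nat.lt_succ_of_le (Nat.le_add_right i n)) f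
  rw [show i + 1 + n = i + n + 1 by omega, eq_sub_iff_add_eq, ← top, bot, add_comm]

lemma Finset.exists_eq_Ico_of_forall_mem (T : Finset ℕ) (hT : T.Nonempty)
    (h : ∀ a ∈ T, ∀ b ∈ T, ∀ x, a ≤ x → x ≤ b → x ∈ T) :
    ∃ i, T = Ico i (i + #T) := by
  set a := T.min' hT
  set b := T.max' hT
  have hab : a ≤ b := T.min'_le_max' hT
  have hIcc : T = Icc a b := by
    ext x
    refine ⟨fun hx => mem_Icc.2 ⟨T.min'_le x hx, T.le_max' x hx⟩, fun hx => ?_⟩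
    exact h _ (T.min'_mem hT) _ (T.max'_mem hT) x (mem_Icc.1 hx).1 (mem_Icc.1 hx).2
  have hcard : #T = b + 1 - a := (congrArg card hIcc).trans (Nat.card_Icc a b)
  refine ⟨a, ?_⟩
  rw [hcard]
  nth_rewrite 1 [hIcc]
  ext x
  simp only [mem_Icc, mem_Ico]
  omega

lemma prod_prod_filter_sq_sub_ne_zero {ι R : Type*} [LinearOrder ι] [CommRing R] [IsDomain R]
    {S : Finset ι} {k : ι → R} (hk : Set.InjOn k S) :
    ∏ j ∈ S, ∏ l ∈ S.filter (fun l => j < l), (k j - k l) ^ 2 ≠ 0 :=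
  prod_ne_zero_iff.2 fun _ hj => prod_ne_zero_iff.2 fun _ hl =>
    pow_ne_zero 2 <| sub_ne_zero.2 fun h =>
      (mem_filter.1 hl).2.ne (hk hj (mem_filter.1 hl).1 h)

lemma le_of_isMinOn_sum_of_mem_of_notMem {ι β : Type*} [DecidableEq ι] [AddCommGroup β]
    [LinearOrder β] [IsOrderedAddMonoid β] {U T : Finset ι} {M : ℕ} {η : ι → β}
    (hTmem : T ∈ powersetCard M U)
    (hT : IsMinOn (fun S => ∑ j ∈ S, η j) (powersetCard M U) T)
    {a x : ι} (ha : a ∈ T) (hx : x ∈ U) (hxT : x ∉ T) : η a ≤ η x := by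
  obtain ⟨hTU, hTcard⟩ := mem_powersetCard.1 hTmem
  have hxT' : x ∉ T.erase a := fun h => hxT (mem_of_mem_erase h)
  have hswap : insert x (T.erase a) ∈ powersetCard M U := by
    refine mem_powersetCard.2 ⟨insert_subset hx ((erase_subset a T).trans hTU), ?_⟩
    rw [card_insert_of_notMem hxT', card_erase_of_mem ha, hTcard]
    have : 0 < M := hTcard ▸ card_pos.2 ⟨a, ha⟩
    omega
  have := isMinOn_iff.1 hT _ hswap
  rwa [sum_insert hxT', sum_erase_eq_sub ha, add_sub_left_comm, le_add_iff_nonneg_right,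
    sub_nonneg] at this

section Blocks

variable {k : ℕ → ℝ} {c : ℝ} {M N : ℕ}

local notation "𝒮" => powersetCard M (Icc 1 N)
local notation "E" => fun S : Finset ℕ => ∑ j ∈ S, k j * (k j - c)

lemma Ico_mem_powersetCard_Icc {i : ℕ} (hi : 1 ≤ i) (hiN : i + M ≤ N + 1) :
    Ico i (i + M) ∈ 𝒮 := by
  refine mem_powersetCard.2 ⟨fun x hx => ?_, by simp⟩
  simp only [mem_Ico, mem_Icc] at hx ⊢
  omega

lemma exists_eq_Ico_of_isMinOn (hk : StrictMonoOn k (Set.Icc 1 N)) (hM : 1 ≤ M)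
    {T : Finset ℕ} (hTmem : T ∈ 𝒮) (hT : IsMinOn E 𝒮 T) :
    ∃ i, 1 ≤ i ∧ i + M ≤ N + 1 ∧ T = Ico i (i + M) := by
  obtain ⟨hTU, hTcard⟩ := mem_powersetCard.1 hTmem
  have hbounds : ∀ {x}, x ∈ T → 1 ≤ x ∧ x ≤ N := fun hx => mem_Icc.1 (hTU hx)
  have hconvex : ∀ a ∈ T, ∀ b ∈ T, ∀ x, a ≤ x → x ≤ b → x ∈ T := by
    intro a ha b hb x hax hxb
    by_contra hxT
    have hax : a < x := lt_of_le_of_ne hax (by rintro rfl; exact hxT ha)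
    have hxb : x < b := lt_of_le_of_ne hxb (by rintro rfl; exact hxT hb)
    have hx : x ∈ Icc 1 N := mem_Icc.2 ⟨(hbounds ha).1.trans hax.le, hxb.le.trans (hbounds hb).2⟩
    have hka := hk ⟨(hbounds ha).1, (hax.trans hxb).le.trans (hbounds hb).2⟩ (mem_Icc.1 hx) hax
    have hkb := hk (mem_Icc.1 hx) (hbounds hb) hxb
    have h₁ := (mul_sub_le_mul_sub_iff_of_lt c hka).1
      (le_of_isMinOn_sum_of_mem_of_notMem hTmem hT ha hx hxT)
    have h₂ := not_lt.2 (le_of_isMinOn_sum_of_mem_of_notMem hTmem hT hb hx hxT)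
    rw [mul_sub_lt_mul_sub_iff_of_lt c hkb, not_lt] at h₂
    linarith
  obtain ⟨i, hi⟩ := T.exists_eq_Ico_of_forall_mem (card_pos.1 (by omega)) hconvex
  rw [hTcard] at hi
  have hfirst := hbounds (hi ▸ left_mem_Ico.2 (by omega) : i ∈ T)
  have hlast := hbounds (hi ▸ mem_Ico.2 ⟨by omega, by omega⟩ : i + M - 1 ∈ T)
  exact ⟨i, hfirst.1, by omega, hi⟩

lemma not_isMinOn_Ico_and_Ico (hk : StrictMonoOn k (Set.Icc 1 N)) (hM : 1 ≤ M)
    (hc : ∀ i, 1 ≤ i → i ≤ N - M → c ≠ k i + k (M + i)) {i j : ℕ} (hi : 1 ≤ i) (hij : i ≤ j)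
    (hjN : j + 1 + M ≤ N + 1) (hmin_i : IsMinOn E 𝒮 (Ico i (i + M)))
    (hmin_j : IsMinOn E 𝒮 (Ico (j + 1) (j + 1 + M))) : False := by
  have hki : k i < k (i + M) := hk ⟨hi, by omega⟩ ⟨by omega, by omega⟩ (by omega)
  have hkj : k j < k (j + M) := hk ⟨by omega, by omega⟩ ⟨by omega, by omega⟩ (by omega)
  have hkij : k i + k (i + M) ≤ k j + k (j + M) := by
    have h₁ := hk.monotoneOn ⟨hi, by omega⟩ ⟨hi.trans hij, by omega⟩ hij
    have h₂ := hk.monotoneOn ⟨by omega, by omega⟩ ⟨by omega, by omega⟩ (by omega : i + M ≤ j + M)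
    linarith
  have hstep_i := isMinOn_iff.1 hmin_i (Ico (i + 1) (i + 1 + M))
    (Ico_mem_powersetCard_Icc (by omega) (by omega))
  have hstep_j := isMinOn_iff.1 hmin_j (Ico j (j + M))
    (Ico_mem_powersetCard_Icc (hi.trans hij) (by omega))
  simp only [sum_Ico_succ_add] at hstep_i hstep_j
  have hci := (mul_sub_le_mul_sub_iff_of_lt c hki).1 (by linarith)
  have hcj := not_lt.2 (show k (j + M) * (k (j + M) - c) ≤ k j * (k j - c) by linarith)
  rw [mul_sub_lt_mul_sub_iff_of_lt c hkj, not_lt] at hcj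
  have hres := hc i hi (by omega)
  rw [add_comm M i] at hres
  exact hres (by linarith)

theorem exists_forall_sum_mul_sub_lt (hk : StrictMonoOn k (Set.Icc 1 N)) (hM : 1 ≤ M)
    (hMN : M ≤ N) (hc : ∀ i, 1 ≤ i → i ≤ N - M → c ≠ k i + k (M + i)) :
    ∃ S ∈ 𝒮, ∀ T ∈ 𝒮, T ≠ S → E S < E T := by
  have hne : (𝒮).Nonempty := powersetCard_nonempty.2 (by simpa using hMN)
  obtain ⟨S, hS, hSmin⟩ := exists_min_image 𝒮 E hne
  replace hSmin : IsMinOn E 𝒮 S := isMinOn_iff.2 hSmin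
  refine ⟨S, hS, fun T hT hTS => lt_of_not_ge fun hTS_le => hTS ?_⟩
  have hTmin : IsMinOn E 𝒮 T :=
    isMinOn_iff.2 fun U hU => hTS_le.trans (isMinOn_iff.1 hSmin U hU)
  obtain ⟨i, hi, hiN, rfl⟩ := exists_eq_Ico_of_isMinOn hk hM hS hSmin
  obtain ⟨j, hj, hjN, rfl⟩ := exists_eq_Ico_of_isMinOn hk hM hT hTmin
  obtain hij | rfl | hji := lt_trichotomy i j
  · obtain ⟨j, rfl⟩ := Nat.exists_eq_add_of_lt hij
    exact (not_isMinOn_Ico_and_Ico hk hM hc (j := i + j) hi (by omega) hjN hSmin hTmin).elim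
  · rfl
  · obtain ⟨i, rfl⟩ := Nat.exists_eq_add_of_lt hji
    exact (not_isMinOn_Ico_and_Ico hk hM hc (j := j + i) hj (by omega) hiN hTmin hSmin).elim

end Blocks

lemma tendsto_exp_neg_mul_sum_mul_exp_atBot {ι : Type*} [DecidableEq ι] (s : Finset ι)
    (a e b : ι → ℝ) {i₀ : ι} (hi₀ : i₀ ∈ s) (he : ∀ i ∈ s, i ≠ i₀ → e i₀ < e i) :
    Tendsto (fun y => exp (-(e i₀ * y)) * ∑ i ∈ s, a i * exp (e i * y + b i)) atBot
      (𝓝 (a i₀ * exp (b i₀))) := by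
  have hterm : ∀ i ∈ s, Tendsto (fun y => a i * exp ((e i - e i₀) * y + b i)) atBot
      (𝓝 (if i = i₀ then a i₀ * exp (b i₀) else 0)) := by
    intro i hi
    split_ifs with h
    · subst h
      simp only [sub_self, zero_mul, zero_add, tendsto_const_nhds]
    · have hlin : Tendsto (fun y => (e i - e i₀) * y + b i) atBot atBot :=
        tendsto_atBot_add_const_right _ _
          ((tendsto_const_mul_atBot_of_pos (sub_pos.2 (he i hi h))).2 tendsto_id)
      simpa using (tendsto_exp_atBot.comp hlin).const_mul (a i)
  have hsum := tendsto_finsetSum s hterm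
  rw [sum_ite_eq' s i₀, if_pos hi₀] at hsum
  refine hsum.congr fun y => ?_
  rw [mul_sum]
  refine sum_congr rfl fun i _ => ?_
  rw [mul_left_comm, ← exp_add]
  congr 2
  ring

lemma tendsto_sum_mul_exp_div_sum_mul_exp_atBot {ι : Type*} [DecidableEq ι] (s : Finset ι)
    (a v e b : ι → ℝ) {i₀ : ι} (hi₀ : i₀ ∈ s) (he : ∀ i ∈ s, i ≠ i₀ → e i₀ < e i)
    (ha : a i₀ ≠ 0) :
    Tendsto (fun y => (∑ i ∈ s, a i * v i * exp (e i * y + b i)) /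
      ∑ i ∈ s, a i * exp (e i * y + b i)) atBot (𝓝 (v i₀)) := by
  have hnum := tendsto_exp_neg_mul_sum_mul_exp_atBot s (fun i => a i * v i) e b hi₀ he
  have hden := tendsto_exp_neg_mul_sum_mul_exp_atBot s a e b hi₀ he
  have hlim := hnum.div hden (mul_ne_zero ha (exp_ne_zero _))
  rw [mul_right_comm, mul_div_cancel_left₀ _ (mul_ne_zero ha (exp_ne_zero _))] at hlim
  exact hlim.congr fun y => mul_div_mul_left _ _ (exp_ne_zero _)

lemma hasDerivAt_sum_mul_exp_sum {ι : Type*} (𝒮 : Finset (Finset ι)) (Δ : Finset ι → ℝ)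
    {φ : ι → ℝ → ℝ} {φ' : ι → ℝ} {x : ℝ} (hφ : ∀ j, HasDerivAt (φ j) (φ' j) x) :
    HasDerivAt (fun x => ∑ S ∈ 𝒮, Δ S * exp (∑ j ∈ S, φ j x))
      (∑ S ∈ 𝒮, Δ S * (∑ j ∈ S, φ' j) * exp (∑ j ∈ S, φ j x)) x := by
  refine HasDerivAt.fun_sum fun S _ => ?_
  exact (((HasDerivAt.fun_sum fun j (_ : j ∈ S) => hφ j).exp).const_mul (Δ S)).congr_deriv
    (by ring)

theorem w1_trivial_limit_nonresonant_general
    (N : ℕ)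
    (M : ℕ) (hM1 : 1 ≤ M) (hM2 : M ≤ N - 1)
    (k θ0 : ℕ → ℝ)
    (hk : ∀ a b, 1 ≤ a → a < b → b ≤ N → k a < k b)
    (θ : ℕ → ℝ → ℝ → ℝ)
    (hθ : ∀ i x y, θ i x y = -(k i) * x + (k i) ^ 2 * y + θ0 i)
    (Δ : Finset ℕ → ℝ)
    (hΔ : ∀ S, Δ S = ∏ j ∈ S, ∏ l ∈ S.filter (fun l => j < l), (k j - k l) ^ 2)
    (τ : ℝ → ℝ → ℝ)
    (hτ : ∀ x y, τ x y = ∑ S ∈ Finset.powersetCard M (Finset.Icc 1 N),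
        Δ S * Real.exp (∑ j ∈ S, θ j x y))
    (w1 : ℝ → ℝ → ℝ)
    (hw1 : ∀ x y, w1 x y = -(deriv (fun x' => τ x' y) x) / τ x y)
    (η : ℕ → ℝ → ℝ)
    (hη : ∀ i c, η i c = k i * (k i - c))
    (c : ℝ) (hc : ∀ i, 1 ≤ i → i ≤ N - M → c ≠ k i + k (M + i)) :
    ∃ Sstar ∈ Finset.powersetCard M (Finset.Icc 1 N),
      (∀ S ∈ Finset.powersetCard M (Finset.Icc 1 N), S ≠ Sstar →
          (∑ j ∈ Sstar, η j c) < ∑ j ∈ S, η j c) ∧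
      (∀ ξ : ℝ, Tendsto (fun y : ℝ => w1 (c * y + ξ) y) atBot
          (nhds (∑ j ∈ Sstar, k j))) := by
  have hk' : StrictMonoOn k (Set.Icc 1 N) := fun a ha b hb hab => hk a b ha.1 hab hb.2
  obtain ⟨S₀, hS₀, hmin⟩ := exists_forall_sum_mul_sub_lt hk' hM1 (by omega) hc
  simp only [← hη] at hmin
  refine ⟨S₀, hS₀, hmin, fun ξ => ?_⟩
  have hΔ₀ : Δ S₀ ≠ 0 := hΔ S₀ ▸ prod_prod_filter_sq_sub_ne_zero
    (hk'.injOn.mono fun j hj => by simpa using (mem_powersetCard.1 hS₀).1 hj)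
  have hline : ∀ y, w1 (c * y + ξ) y =
      (∑ S ∈ powersetCard M (Icc 1 N), Δ S * (∑ j ∈ S, k j) *
          exp ((∑ j ∈ S, η j c) * y + ∑ j ∈ S, (θ0 j - k j * ξ))) /
        ∑ S ∈ powersetCard M (Icc 1 N), Δ S *
          exp ((∑ j ∈ S, η j c) * y + ∑ j ∈ S, (θ0 j - k j * ξ)) := by
    intro y
    have hφ : ∀ j, HasDerivAt (fun x => θ j x y) (-(k j)) (c * y + ξ) := fun j => by
      simp only [hθ]
      exact (((hasDerivAt_id _).const_mul (-(k j))).add_const (k j ^ 2 * y)).add_const (θ0 j)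
        |>.congr_deriv (mul_one _)
    have hθline : ∀ S : Finset ℕ, ∑ j ∈ S, θ j (c * y + ξ) y =
        (∑ j ∈ S, η j c) * y + ∑ j ∈ S, (θ0 j - k j * ξ) := fun S => by
      rw [sum_mul, ← sum_add_distrib]
      exact sum_congr rfl fun j _ => by rw [hθ, hη]; ring
    simp only [hw1, hτ, (hasDerivAt_sum_mul_exp_sum _ Δ hφ).deriv, hθline, sum_neg_distrib,
      mul_neg, neg_mul, neg_neg]
  exact (tendsto_sum_mul_exp_div_sum_mul_exp_atBot _ Δ _ _ _ hS₀ hmin hΔ₀).congr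
    fun y => (hline y).symm

/-- trivial limit along non-resonant lines: if c ≠ k_i + k_{M+i}
for every i = 1,…,N−M, then there is a unique M-element subset S* of {1,…,N}
minimizing S ↦ Σ_{j∈S} η_j(c) (η_j(c) = k_j(k_j − c)), and for every ξ,
w₁(c y + ξ, y) → Σ_{j∈S*} k_j as y → −∞ (a constant independent of ξ). -/
theorem w1_trivial_limit_nonresonant
    (N : ℕ) (hN : 2 ≤ N)
    (M : ℕ) (hM1 : 1 ≤ M) (hM2 : M ≤ N - 1)
    (k θ0 : ℕ → ℝ)
    (hk : ∀ a b, 1 ≤ a → a < b → b ≤ N → k a < k b)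
    (θ : ℕ → ℝ → ℝ → ℝ)
    (hθ : ∀ i x y, θ i x y = -(k i) * x + (k i) ^ 2 * y + θ0 i)
    (Δ : Finset ℕ → ℝ)
    (hΔ : ∀ S, Δ S = ∏ j ∈ S, ∏ l ∈ S.filter (fun l => j < l), (k j - k l) ^ 2)
    (τ : ℝ → ℝ → ℝ)
    (hτ : ∀ x y, τ x y = ∑ S ∈ Finset.powersetCard M (Finset.Icc 1 N),
        Δ S * Real.exp (∑ j ∈ S, θ j x y))
    (w1 : ℝ → ℝ → ℝ)
    (hw1 : ∀ x y, w1 x y = -(deriv (fun x' => τ x' y) x) / τ x y)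
    (η : ℕ → ℝ → ℝ)
    (hη : ∀ i c, η i c = k i * (k i - c))
    (c : ℝ) (hc : ∀ i, 1 ≤ i → i ≤ N - M → c ≠ k i + k (M + i)) :
    ∃ Sstar ∈ Finset.powersetCard M (Finset.Icc 1 N),
      (∀ S ∈ Finset.powersetCard M (Finset.Icc 1 N), S ≠ Sstar →
          (∑ j ∈ Sstar, η j c) < ∑ j ∈ S, η j c) ∧
      (∀ ξ : ℝ, Tendsto (fun y : ℝ => w1 (c * y + ξ) y) atBot
          (nhds (∑ j ∈ Sstar, k j))) :=
  w1_trivial_limit_nonresonant_general N M hM1 hM2 k θ0 hk θ hθ Δ hΔ τ hτ w1 hw1 η hη c hc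
end

section
/- (Sorting property of the Toda diagonal entries.) For 1 ≤ j ≤ N define b_j(x) = τ_j'(x)/τ_j(x) − τ_{j−1}'(x)/τ_{j−1}(x) (the logarithmic derivative of τ_j/τ_{j−1}; all τ_j are strictly positive). Then for every 1 ≤ j ≤ N: b_j(x) → −k_j as x → +∞, and b_j(x) → −k_{N−j+1} as x → −∞. -/
open Filter Finset Real Topology

/-!
For j ≤ N, τ_j is an exponential sum ∑_{|S| = j} c_S e^{-(∑_{l ∈ S} k_l) x} with nonzero
coefficients. As x → +∞ its log-derivative tends to the exponent of the strictly dominant term,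
i.e. to -(k_1 + ⋯ + k_j), because S = {1, …, j} is the unique j-subset minimising ∑_{l ∈ S} k_l
(an exchange argument, using that k is strictly increasing). As x → -∞ the dominant subset is
{N - j + 1, …, N}. Since b_j is the difference of consecutive log-derivatives, the limits
telescope to -k_j and -k_{N-j+1}.
-/

theorem Finset.sum_lt_sum_of_card_eq_of_forall_lt {ι M : Type*} [DecidableEq ι] [AddCommMonoid M]
    [LinearOrder M] [IsOrderedCancelAddMonoid M] {L S : Finset ι} {f : ι → M}
    (hcard : #S = #L) (hne : S ≠ L) (hlt : ∀ i ∈ L, ∀ j ∈ S \ L, f i < f j) :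
    ∑ i ∈ L, f i < ∑ i ∈ S, f i := by
  have hS : (S \ L).Nonempty := by
    rw [nonempty_iff_ne_empty, Ne, sdiff_eq_empty_iff_subset]
    exact fun h => hne (eq_of_subset_of_card_le h hcard.ge)
  have hL : (L \ S).Nonempty := by
    rw [← card_pos, card_sdiff_comm hcard.symm]
    exact card_pos.mpr hS
  obtain ⟨m, hm, hmax⟩ := (L \ S).exists_max_image f hL
  have hm' : ∀ j ∈ S \ L, f m < f j := hlt m (mem_sdiff.mp hm).1
  have hsdiff : ∑ i ∈ L \ S, f i < ∑ i ∈ S \ L, f i :=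
    calc ∑ i ∈ L \ S, f i ≤ #(L \ S) • f m := sum_le_card_nsmul _ _ _ hmax
      _ = ∑ _j ∈ S \ L, f m := by rw [sum_const, card_sdiff_comm hcard]
      _ < ∑ j ∈ S \ L, f j := sum_lt_sum_of_nonempty hS hm'
  rw [← sum_inter_add_sum_sdiff L S, ← sum_inter_add_sum_sdiff S L, inter_comm]
  exact add_lt_add_right hsdiff _

noncomputable def expSum {ι : Type*} (T : Finset ι) (c a : ι → ℝ) (x : ℝ) : ℝ :=
  ∑ i ∈ T, c i * exp (a i * x)

section expSum

variable {ι : Type*} {T : Finset ι} {c a : ι → ℝ}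

theorem hasDerivAt_expSum (x : ℝ) :
    HasDerivAt (expSum T c a) (expSum T (fun i => c i * a i) a x) x := by
  refine HasDerivAt.fun_sum fun i _ =>
    ((((hasDerivAt_id x).const_mul (a i)).exp).const_mul (c i)).congr_deriv ?_
  rw [id, mul_one]
  ring

theorem expSum_sub_const_mul (b x : ℝ) :
    expSum T c (fun i => a i - b) x = expSum T c a x * exp (-(b * x)) := by
  simp only [expSum, sum_mul, mul_assoc, ← exp_add]
  congr! 3
  ring

theorem tendsto_expSum_sub_of_dominant [DecidableEq ι] {i₀ : ι} {l : Filter ℝ} (hi₀ : i₀ ∈ T)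
    (hdom : ∀ i ∈ T, i ≠ i₀ → Tendsto (fun x => (a i - a i₀) * x) l atBot) :
    Tendsto (expSum T c fun i => a i - a i₀) l (𝓝 (c i₀)) := by
  have hterm : ∀ i ∈ T, Tendsto (fun x => c i * exp ((a i - a i₀) * x)) l
      (𝓝 (if i = i₀ then c i else 0)) := by
    intro i hi
    by_cases h : i = i₀
    · subst h
      simp [tendsto_const_nhds]
    · simpa [h] using (tendsto_exp_atBot.comp (hdom i hi h)).const_mul (c i)
  have hsum := tendsto_finsetSum T hterm
  rwa [sum_ite_eq', if_pos hi₀] at hsum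

theorem tendsto_logDeriv_expSum_of_dominant [DecidableEq ι] {i₀ : ι} {l : Filter ℝ}
    (hi₀ : i₀ ∈ T) (hc : c i₀ ≠ 0)
    (hdom : ∀ i ∈ T, i ≠ i₀ → Tendsto (fun x => (a i - a i₀) * x) l atBot) :
    Tendsto (logDeriv (expSum T c a)) l (𝓝 (a i₀)) := by
  have hratio : ∀ x, logDeriv (expSum T c a) x =
      expSum T (fun i => c i * a i) (fun i => a i - a i₀) x /
        expSum T c (fun i => a i - a i₀) x := by
    intro x
    rw [logDeriv_apply, (hasDerivAt_expSum x).deriv, expSum_sub_const_mul, expSum_sub_const_mul,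
      mul_div_mul_right _ _ (exp_ne_zero _)]
  have hlim := (tendsto_expSum_sub_of_dominant (c := fun i => c i * a i) hi₀ hdom).div
    (tendsto_expSum_sub_of_dominant hi₀ hdom) hc
  rw [mul_div_cancel_left₀ _ hc] at hlim
  exact hlim.congr fun x => (hratio x).symm

end expSum

theorem prod_prod_sub_sq_ne_zero {ι R : Type*} [LinearOrder ι] [CommRing R] [IsDomain R]
    {k : ι → R} {S : Finset ι} (hk : Set.InjOn k S) :
    ∏ l ∈ S, ∏ m ∈ S.filter (fun m => l < m), (k l - k m) ^ 2 ≠ 0 := by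
  refine prod_ne_zero_iff.mpr fun l hl => prod_ne_zero_iff.mpr fun m hm => ?_
  obtain ⟨hmS, hlm⟩ := mem_filter.mp hm
  exact pow_ne_zero _ (sub_ne_zero.mpr fun h => hlm.ne (hk hl hmS h))

section SubsetSums

variable {N j : ℕ} {k : ℕ → ℝ} {S : Finset ℕ}

theorem sum_Icc_one_lt_sum_of_ne (hk : StrictMonoOn k (Set.Icc 1 N))
    (hS : S ∈ powersetCard j (Icc 1 N)) (hne : S ≠ Icc 1 j) :
    ∑ l ∈ Icc 1 j, k l < ∑ l ∈ S, k l := by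
  rw [mem_powersetCard] at hS
  refine sum_lt_sum_of_card_eq_of_forall_lt (by simp [hS.2]) hne fun i hi m hm => ?_
  obtain ⟨hmS, hmj⟩ := mem_sdiff.mp hm
  have hm' := mem_Icc.mp (hS.1 hmS)
  have hi' := mem_Icc.mp hi
  simp only [mem_Icc, not_and_or, not_le] at hmj
  exact hk ⟨hi'.1, by omega⟩ hm' (by omega)

theorem sum_lt_sum_Icc_of_ne (hk : StrictMonoOn k (Set.Icc 1 N))
    (hS : S ∈ powersetCard j (Icc 1 N)) (hne : S ≠ Icc (N - j + 1) N) :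
    ∑ l ∈ S, k l < ∑ l ∈ Icc (N - j + 1) N, k l := by
  rw [mem_powersetCard] at hS
  have hjN : j ≤ N := by simpa [hS.2] using card_le_card hS.1
  suffices ∑ l ∈ Icc (N - j + 1) N, -k l < ∑ l ∈ S, -k l by
    simpa only [sum_neg_distrib, neg_lt_neg_iff] using this
  refine sum_lt_sum_of_card_eq_of_forall_lt (by simp [hS.2]; omega) hne fun i hi m hm => ?_
  obtain ⟨hmS, hmj⟩ := mem_sdiff.mp hm
  have hm' := mem_Icc.mp (hS.1 hmS)
  have hi' := mem_Icc.mp hi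
  simp only [mem_Icc, not_and_or, not_le] at hmj
  exact neg_lt_neg (hk hm' ⟨by omega, hi'.2⟩ (by omega))

theorem tendsto_logDeriv_expSum_powersetCard_atTop (hk : StrictMonoOn k (Set.Icc 1 N))
    (hj : j ≤ N) {c : Finset ℕ → ℝ} (hc : c (Icc 1 j) ≠ 0) :
    Tendsto (logDeriv (expSum (powersetCard j (Icc 1 N)) c fun S => -∑ l ∈ S, k l)) atTop
      (𝓝 (-∑ l ∈ Icc 1 j, k l)) :=
  tendsto_logDeriv_expSum_of_dominant (mem_powersetCard.mpr ⟨Icc_subset_Icc_right hj, by simp⟩)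
    hc fun _ hS hne => tendsto_id.const_mul_atTop_of_neg <| by
      linarith [sum_Icc_one_lt_sum_of_ne hk hS hne]

theorem tendsto_logDeriv_expSum_powersetCard_atBot (hk : StrictMonoOn k (Set.Icc 1 N))
    (hj : j ≤ N) {c : Finset ℕ → ℝ} (hc : c (Icc (N - j + 1) N) ≠ 0) :
    Tendsto (logDeriv (expSum (powersetCard j (Icc 1 N)) c fun S => -∑ l ∈ S, k l)) atBot
      (𝓝 (-∑ l ∈ Icc (N - j + 1) N, k l)) :=
  tendsto_logDeriv_expSum_of_dominant
    (mem_powersetCard.mpr ⟨Icc_subset_Icc_left (by omega), by simp; omega⟩)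
    hc fun _ hS hne => tendsto_id.const_mul_atBot <| by
      linarith [sum_lt_sum_Icc_of_ne hk hS hne]

end SubsetSums

theorem toda_diagonal_sorting_general
    (N : ℕ)
    (k θ0 : ℕ → ℝ)
    (hk : ∀ a b, 1 ≤ a → a < b → b ≤ N → k a < k b)
    (Δ : Finset ℕ → ℝ)
    (hΔ : ∀ S, Δ S = ∏ l ∈ S, ∏ m ∈ S.filter (fun m => l < m), (k l - k m) ^ 2)
    (τ : ℕ → ℝ → ℝ)
    (hτ : ∀ j x, τ j x = ∑ S ∈ Finset.powersetCard j (Finset.Icc 1 N),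
        Δ S * Real.exp (∑ l ∈ S, (-(k l) * x + θ0 l)))
    (b : ℕ → ℝ → ℝ)
    (hb : ∀ j x, b j x = deriv (τ j) x / τ j x - deriv (τ (j - 1)) x / τ (j - 1) x) :
    ∀ j, 1 ≤ j → j ≤ N →
      Tendsto (b j) atTop (nhds (-(k j))) ∧
      Tendsto (b j) atBot (nhds (-(k (N - j + 1)))) := by
  have hk_mono : StrictMonoOn k (Set.Icc 1 N) := fun a ha b hb hab => hk a b ha.1 hab hb.2
  set c : Finset ℕ → ℝ := fun S => Δ S * exp (∑ l ∈ S, θ0 l)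
  have hτ_eq : ∀ j, τ j = expSum (powersetCard j (Icc 1 N)) c fun S => -∑ l ∈ S, k l := by
    refine fun j => funext fun x => (hτ j x).trans (sum_congr rfl fun S _ => ?_)
    simp only [c, sum_add_distrib, exp_add, ← sum_mul, sum_neg_distrib, neg_mul]
    ring
  have hc : ∀ S ⊆ Icc 1 N, c S ≠ 0 := fun S hS => mul_ne_zero
    (hΔ S ▸ prod_prod_sub_sq_ne_zero (hk_mono.injOn.mono (coe_Icc 1 N ▸ coe_subset.mpr hS)))
    (exp_ne_zero _)
  intro j hj hjN
  obtain ⟨i, rfl⟩ : ∃ i, j = i + 1 := ⟨j - 1, by omega⟩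
  have hb_eq : b (i + 1) = logDeriv (τ (i + 1)) - logDeriv (τ i) :=
    funext fun x => by simp only [hb, Pi.sub_apply, logDeriv_apply, add_tsub_cancel_right]
  rw [hb_eq, hτ_eq, hτ_eq]
  constructor
  · have hlim := (tendsto_logDeriv_expSum_powersetCard_atTop hk_mono hjN
      (hc _ (Icc_subset_Icc_right hjN))).sub (tendsto_logDeriv_expSum_powersetCard_atTop
      hk_mono (Nat.le_of_succ_le hjN) (hc _ (Icc_subset_Icc_right (by omega))))
    have hval : -∑ l ∈ Icc 1 (i + 1), k l - -∑ l ∈ Icc 1 i, k l = -k (i + 1) := by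
      rw [sum_Icc_succ_top (by omega)]
      ring
    rwa [hval] at hlim
  · have hlim := (tendsto_logDeriv_expSum_powersetCard_atBot hk_mono hjN
      (hc _ (Icc_subset_Icc_left (by omega)))).sub (tendsto_logDeriv_expSum_powersetCard_atBot
      hk_mono (Nat.le_of_succ_le hjN) (hc _ (Icc_subset_Icc_left (by omega))))
    have hval : -∑ l ∈ Icc (N - (i + 1) + 1) N, k l - -∑ l ∈ Icc (N - i + 1) N, k l =
        -k (N - (i + 1) + 1) := by
      rw [show N - (i + 1) + 1 = N - i by omega, ← insert_Icc_add_one_left_eq_Icc (Nat.sub_le N i),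
        sum_insert (by simp)]
      ring
    rwa [hval] at hlim

/-- sorting property of the Toda diagonal entries: with
τ_j(x) = Σ_{|S|=j} Δ(S) exp(Σ_{l∈S}(−k_l x + θ_l⁰)) (so τ_0 = 1) and
b_j = τ_j'/τ_j − τ_{j−1}'/τ_{j−1}, one has b_j(x) → −k_j as x → +∞ and
b_j(x) → −k_{N−j+1} as x → −∞, for every 1 ≤ j ≤ N. -/
theorem toda_diagonal_sorting
    (N : ℕ) (hN : 1 ≤ N)
    (k θ0 : ℕ → ℝ)
    (hk : ∀ a b, 1 ≤ a → a < b → b ≤ N → k a < k b)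
    (Δ : Finset ℕ → ℝ)
    (hΔ : ∀ S, Δ S = ∏ l ∈ S, ∏ m ∈ S.filter (fun m => l < m), (k l - k m) ^ 2)
    (τ : ℕ → ℝ → ℝ)
    (hτ : ∀ j x, τ j x = ∑ S ∈ Finset.powersetCard j (Finset.Icc 1 N),
        Δ S * Real.exp (∑ l ∈ S, (-(k l) * x + θ0 l)))
    (b : ℕ → ℝ → ℝ)
    (hb : ∀ j x, b j x = deriv (τ j) x / τ j x - deriv (τ (j - 1)) x / τ (j - 1) x) :
    ∀ j, 1 ≤ j → j ≤ N →
      Tendsto (b j) atTop (nhds (-(k j))) ∧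
      Tendsto (b j) atBot (nhds (-(k (N - j + 1)))) :=
  toda_diagonal_sorting_general N k θ0 hk Δ hΔ τ hτ b hb
end

section
/- (Vanishing of the Toda off-diagonal entries.) For every 1 ≤ j ≤ N−1, the quantity a_j(x)² = τ_{j+1}(x) τ_{j−1}(x) / τ_j(x)² tends to 0 both as x → +∞ and as x → −∞. -/
/-!
Write `τ_j(x) = ∑_{|S| = j} c_S e^{-k_S x}` with `c_S = Δ(S) e^{θ_S} > 0` and
`k_S = ∑_{l ∈ S} k_l`. A sum of positive exponentials is `Θ` of its dominant term: as `x → +∞`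
the one with the smallest `k_S`, which an exchange argument shows is `S = {1, …, j}`, and as
`x → -∞` the one with the largest `k_S`, attained at `S = {N - j + 1, …, N}`. Hence `a_j(x)²` is
`Θ(e^{-(k_{j+1} - k_j) x})` at `+∞` and `Θ(e^{(k_{N-j+1} - k_{N-j}) x})` at `-∞`, and both tend
to `0`.
-/

open Filter Finset Real Asymptotics Topology

theorem Finset.sum_le_sum_of_card_eq_of_forall_sdiff_le {ι M : Type*} [DecidableEq ι]
    [AddCommMonoid M] [LinearOrder M] [IsOrderedAddMonoid M] {s t : Finset ι} {f : ι → M}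
    (hcard : #s = #t) (hle : ∀ a ∈ s \ t, ∀ b ∈ t \ s, f a ≤ f b) :
    ∑ i ∈ s, f i ≤ ∑ i ∈ t, f i := by
  have hsdiff : ∑ i ∈ s \ t, f i ≤ ∑ i ∈ t \ s, f i := by
    have hcard' : #(s \ t) = #(t \ s) := card_sdiff_comm hcard
    rcases (s \ t).eq_empty_or_nonempty with h | h
    · rw [h, card_empty, eq_comm, card_eq_zero] at hcard'
      rw [h, hcard']
    · calc ∑ i ∈ s \ t, f i ≤ #(s \ t) • (s \ t).sup' h f :=
            sum_le_card_nsmul _ _ _ fun a ha => le_sup' f ha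
        _ = #(t \ s) • (s \ t).sup' h f := by rw [hcard']
        _ ≤ ∑ i ∈ t \ s, f i :=
            card_nsmul_le_sum _ _ _ fun b hb => sup'_le _ _ fun a ha => hle a ha b hb
  rw [← sum_inter_add_sum_sdiff s t, ← sum_inter_add_sum_sdiff t s, inter_comm]
  gcongr

theorem sum_Ioc_zero_le_sum_of_subset {M : Type*} [AddCommMonoid M] [LinearOrder M]
    [IsOrderedAddMonoid M] {N : ℕ} {k : ℕ → M} (hk : MonotoneOn k (Set.Icc 1 N))
    {S : Finset ℕ} (hS : S ⊆ Icc 1 N) :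
    ∑ l ∈ Ioc 0 #S, k l ≤ ∑ l ∈ S, k l := by
  refine sum_le_sum_of_card_eq_of_forall_sdiff_le (s := Ioc 0 #S) (t := S) (by simp) ?_
  intro a ha b hb
  have hb' := mem_Icc.mp (hS (mem_sdiff.mp hb).1)
  simp only [Finset.mem_sdiff, Finset.mem_Ioc] at ha hb
  exact hk ⟨by omega, by omega⟩ ⟨hb'.1, hb'.2⟩ (by omega)

theorem sum_le_sum_Ioc_of_subset {M : Type*} [AddCommMonoid M] [LinearOrder M]
    [IsOrderedAddMonoid M] {N : ℕ} {k : ℕ → M} (hk : MonotoneOn k (Set.Icc 1 N))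
    {S : Finset ℕ} (hS : S ⊆ Icc 1 N) :
    ∑ l ∈ S, k l ≤ ∑ l ∈ Ioc (N - #S) N, k l := by
  have hSN : #S ≤ N := by simpa using card_le_card hS
  refine sum_le_sum_of_card_eq_of_forall_sdiff_le (by simp; omega) ?_
  intro a ha b hb
  have ha' := mem_Icc.mp (hS (mem_sdiff.mp ha).1)
  simp only [Finset.mem_sdiff, Finset.mem_Ioc] at ha hb
  exact hk ⟨ha'.1, ha'.2⟩ ⟨by omega, hb.1.2⟩ (by omega)

theorem isTheta_sum_mul_exp_neg_atTop {ι : Type*} {s : Finset ι} {c e : ι → ℝ} {i₀ : ι}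
    (hc : ∀ i ∈ s, 0 ≤ c i) (hi₀ : i₀ ∈ s) (hc₀ : 0 < c i₀) (he : ∀ i ∈ s, e i₀ ≤ e i) :
    (fun x => ∑ i ∈ s, c i * exp (-e i * x)) =Θ[atTop] fun x => exp (-e i₀ * x) := by
  have hterm : ∀ x, ∀ i ∈ s, 0 ≤ c i * exp (-e i * x) := fun x i hi => by
    have := hc i hi; positivity
  have hlower : ∀ x, c i₀ * exp (-e i₀ * x) ≤ ∑ i ∈ s, c i * exp (-e i * x) := fun x =>
    single_le_sum (f := fun i => c i * exp (-e i * x)) (hterm x) hi₀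
  have hupper : ∀ x, 0 ≤ x →
      ∑ i ∈ s, c i * exp (-e i * x) ≤ (∑ i ∈ s, c i) * exp (-e i₀ * x) := by
    intro x hx
    rw [sum_mul]
    gcongr with i hi
    · exact hc i hi
    · exact he i hi
  refine ⟨IsBigO.of_bound (∑ i ∈ s, c i) ?_, IsBigO.of_bound (c i₀)⁻¹ ?_⟩
  · filter_upwards [eventually_ge_atTop 0] with x hx
    rw [norm_of_nonneg (sum_nonneg (hterm x)), norm_of_nonneg (exp_pos _).le]
    exact hupper x hx
  · refine Eventually.of_forall fun x => ?_
    rw [norm_of_nonneg (sum_nonneg (hterm x)), norm_of_nonneg (exp_pos _).le,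
      inv_mul_eq_div, le_div_iff₀ hc₀, mul_comm]
    exact hlower x

theorem isTheta_sum_mul_exp_neg_atBot {ι : Type*} {s : Finset ι} {c e : ι → ℝ} {i₀ : ι}
    (hc : ∀ i ∈ s, 0 ≤ c i) (hi₀ : i₀ ∈ s) (hc₀ : 0 < c i₀) (he : ∀ i ∈ s, e i ≤ e i₀) :
    (fun x => ∑ i ∈ s, c i * exp (-e i * x)) =Θ[atBot] fun x => exp (-e i₀ * x) := by
  have h := isTheta_sum_mul_exp_neg_atTop (e := fun i => -e i) hc hi₀ hc₀
    fun i hi => neg_le_neg (he i hi)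
  exact ⟨by simpa [Function.comp_def] using h.1.comp_tendsto tendsto_neg_atBot_atTop,
    by simpa [Function.comp_def] using h.2.comp_tendsto tendsto_neg_atBot_atTop⟩

theorem tendsto_mul_div_sq_of_isTheta_exp_neg {l : Filter ℝ} {f g h : ℝ → ℝ} {a b c : ℝ}
    (hf : f =Θ[l] fun x => exp (-a * x)) (hg : g =Θ[l] fun x => exp (-b * x))
    (hh : h =Θ[l] fun x => exp (-c * x))
    (hlim : Tendsto (fun x => (a - b - (b - c)) * x) l atTop) :
    Tendsto (fun x => f x * h x / g x ^ 2) l (𝓝 0) := by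
  have hexp : (fun x => exp (-a * x) * exp (-c * x) / exp (-b * x) ^ 2)
      = fun x => exp (-((a - b - (b - c)) * x)) := by
    ext x
    rw [← exp_add, ← exp_nat_mul, ← exp_sub]
    ring_nf
  have hθ := (hf.mul hh).div (hg.pow 2)
  rw [hexp] at hθ
  exact hθ.isBigO.trans_tendsto (tendsto_exp_neg_atTop_nhds_zero.comp hlim)

theorem prod_sq_sub_pos_of_injOn {ι R : Type*} [LinearOrder ι] [CommRing R] [LinearOrder R]
    [IsStrictOrderedRing R] {k : ι → R} {S : Finset ι} (hk : Set.InjOn k S) :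
    0 < ∏ l ∈ S, ∏ m ∈ S.filter (fun m => l < m), (k l - k m) ^ 2 := by
  refine prod_pos fun l hl => prod_pos fun m hm => ?_
  obtain ⟨hmS, hlm⟩ := mem_filter.mp hm
  have hne : k l - k m ≠ 0 :=
    sub_ne_zero.mpr fun h => hlm.ne (hk (mem_coe.2 hl) (mem_coe.2 hmS) h)
  positivity

theorem Finset.sum_Ioc_eq_add_sum_Ioc_succ {M : Type*} [AddCommMonoid M] (f : ℕ → M) {a b : ℕ}
    (hab : a < b) : ∑ i ∈ Ioc a b, f i = f (a + 1) + ∑ i ∈ Ioc (a + 1) b, f i := by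
  rw [← sum_Ioc_consecutive f (Nat.le_succ a) hab, Nat.Ioc_succ_singleton, sum_singleton]

noncomputable def todaTau (N : ℕ) (k : ℕ → ℝ) (c : Finset ℕ → ℝ) (j : ℕ) (x : ℝ) : ℝ :=
  ∑ S ∈ powersetCard j (Icc 1 N), c S * exp (-(∑ l ∈ S, k l) * x)

section todaTau

variable {N : ℕ} {k : ℕ → ℝ} {c : Finset ℕ → ℝ}

theorem todaTau_isTheta_atTop (hk : MonotoneOn k (Set.Icc 1 N)) (hc : ∀ S ⊆ Icc 1 N, 0 < c S)
    {j : ℕ} (hj : j ≤ N) :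
    todaTau N k c j =Θ[atTop] fun x => exp (-(∑ l ∈ Ioc 0 j, k l) * x) := by
  have hmem : Ioc 0 j ∈ powersetCard j (Icc 1 N) :=
    mem_powersetCard.2 ⟨fun l hl => by simp only [Finset.mem_Ioc, Finset.mem_Icc] at hl ⊢; omega,
      by simp⟩
  refine isTheta_sum_mul_exp_neg_atTop (e := fun S => ∑ l ∈ S, k l)
    (fun S hS => (hc S (mem_powersetCard.1 hS).1).le) hmem (hc _ (mem_powersetCard.1 hmem).1)
    fun S hS => ?_
  obtain ⟨hsub, rfl⟩ := mem_powersetCard.1 hS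
  exact sum_Ioc_zero_le_sum_of_subset hk hsub

theorem todaTau_isTheta_atBot (hk : MonotoneOn k (Set.Icc 1 N)) (hc : ∀ S ⊆ Icc 1 N, 0 < c S)
    {j : ℕ} (hj : j ≤ N) :
    todaTau N k c j =Θ[atBot] fun x => exp (-(∑ l ∈ Ioc (N - j) N, k l) * x) := by
  have hmem : Ioc (N - j) N ∈ powersetCard j (Icc 1 N) :=
    mem_powersetCard.2 ⟨fun l hl => by simp only [Finset.mem_Ioc, Finset.mem_Icc] at hl ⊢; omega,
      by simp; omega⟩
  refine isTheta_sum_mul_exp_neg_atBot (e := fun S => ∑ l ∈ S, k l)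
    (fun S hS => (hc S (mem_powersetCard.1 hS).1).le) hmem (hc _ (mem_powersetCard.1 hmem).1)
    fun S hS => ?_
  obtain ⟨hsub, rfl⟩ := mem_powersetCard.1 hS
  exact sum_le_sum_Ioc_of_subset hk hsub

theorem tendsto_todaTau_ratio_atTop (hk : StrictMonoOn k (Set.Icc 1 N))
    (hc : ∀ S ⊆ Icc 1 N, 0 < c S) {n : ℕ} (hn : n + 2 ≤ N) :
    Tendsto (fun x => todaTau N k c (n + 2) x * todaTau N k c n x / todaTau N k c (n + 1) x ^ 2)
      atTop (𝓝 0) := by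
  refine tendsto_mul_div_sq_of_isTheta_exp_neg (todaTau_isTheta_atTop hk.monotoneOn hc hn)
    (todaTau_isTheta_atTop hk.monotoneOn hc (by omega))
    (todaTau_isTheta_atTop hk.monotoneOn hc (by omega)) ?_
  have hgap : ∑ l ∈ Ioc 0 (n + 2), k l - ∑ l ∈ Ioc 0 (n + 1), k l
      - (∑ l ∈ Ioc 0 (n + 1), k l - ∑ l ∈ Ioc 0 n, k l) = k (n + 2) - k (n + 1) := by
    rw [sum_Ioc_succ_top (by omega), sum_Ioc_succ_top (by omega)]
    ring
  rw [hgap]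
  exact tendsto_id.const_mul_atTop
    (sub_pos.2 (hk ⟨by omega, by omega⟩ ⟨by omega, hn⟩ (by omega)))

theorem tendsto_todaTau_ratio_atBot (hk : StrictMonoOn k (Set.Icc 1 N))
    (hc : ∀ S ⊆ Icc 1 N, 0 < c S) {n : ℕ} (hn : n + 2 ≤ N) :
    Tendsto (fun x => todaTau N k c (n + 2) x * todaTau N k c n x / todaTau N k c (n + 1) x ^ 2)
      atBot (𝓝 0) := by
  refine tendsto_mul_div_sq_of_isTheta_exp_neg (todaTau_isTheta_atBot hk.monotoneOn hc hn)
    (todaTau_isTheta_atBot hk.monotoneOn hc (by omega))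
    (todaTau_isTheta_atBot hk.monotoneOn hc (by omega)) ?_
  have hgap : ∑ l ∈ Ioc (N - (n + 2)) N, k l - ∑ l ∈ Ioc (N - (n + 1)) N, k l
      - (∑ l ∈ Ioc (N - (n + 1)) N, k l - ∑ l ∈ Ioc (N - n) N, k l)
      = k (N - (n + 1)) - k (N - n) := by
    rw [sum_Ioc_eq_add_sum_Ioc_succ k (a := N - (n + 2)) (by omega),
      show N - (n + 2) + 1 = N - (n + 1) by omega,
      sum_Ioc_eq_add_sum_Ioc_succ k (a := N - (n + 1)) (by omega),
      show N - (n + 1) + 1 = N - n by omega]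
    ring
  rw [hgap]
  exact tendsto_id.const_mul_atBot_of_neg
    (sub_neg.2 (hk ⟨by omega, by omega⟩ ⟨by omega, by omega⟩ (by omega)))

end todaTau

theorem toda_offdiagonal_vanishing_general
    (N : ℕ)
    (k θ0 : ℕ → ℝ)
    (hk : ∀ a b, 1 ≤ a → a < b → b ≤ N → k a < k b)
    (Δ : Finset ℕ → ℝ)
    (hΔ : ∀ S, Δ S = ∏ l ∈ S, ∏ m ∈ S.filter (fun m => l < m), (k l - k m) ^ 2)
    (τ : ℕ → ℝ → ℝ)
    (hτ : ∀ j x, τ j x = ∑ S ∈ Finset.powersetCard j (Finset.Icc 1 N),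
        Δ S * Real.exp (∑ l ∈ S, (-(k l) * x + θ0 l))) :
    ∀ j, 1 ≤ j → j ≤ N - 1 →
      Tendsto (fun x : ℝ => τ (j + 1) x * τ (j - 1) x / (τ j x) ^ 2) atTop (nhds 0) ∧
      Tendsto (fun x : ℝ => τ (j + 1) x * τ (j - 1) x / (τ j x) ^ 2) atBot (nhds 0) := by
  intro j hj1 hj2
  have hk_mono : StrictMonoOn k (Set.Icc 1 N) := fun a ha b hb hab => hk a b ha.1 hab hb.2
  set c : Finset ℕ → ℝ := fun S => Δ S * exp (∑ l ∈ S, θ0 l)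
  have hc : ∀ S ⊆ Icc 1 N, 0 < c S := fun S hS =>
    have hinj : Set.InjOn k S := hk_mono.injOn.mono (coe_Icc 1 N ▸ coe_subset.2 hS)
    mul_pos (hΔ S ▸ prod_sq_sub_pos_of_injOn hinj) (exp_pos _)
  have hτ_eq : ∀ i, τ i = todaTau N k c i := fun i => funext fun x => by
    rw [hτ, todaTau]
    refine sum_congr rfl fun S _ => ?_
    rw [sum_add_distrib, ← sum_mul, sum_neg_distrib, mul_assoc, ← exp_add, add_comm]
  obtain ⟨n, rfl⟩ : ∃ n, j = n + 1 := ⟨j - 1, by omega⟩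
  simp only [hτ_eq, add_tsub_cancel_right]
  exact ⟨tendsto_todaTau_ratio_atTop hk_mono hc (by omega),
    tendsto_todaTau_ratio_atBot hk_mono hc (by omega)⟩

/-- vanishing of the Toda off-diagonal entries: with
τ_j(x) = Σ_{|S|=j} Δ(S) exp(Σ_{l∈S}(−k_l x + θ_l⁰)) (so τ_0 = 1), for every
1 ≤ j ≤ N−1 the quantity a_j(x)² = τ_{j+1}(x)τ_{j−1}(x)/τ_j(x)² tends to 0
both as x → +∞ and as x → −∞. -/
theorem toda_offdiagonal_vanishing
    (N : ℕ) (hN : 2 ≤ N)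
    (k θ0 : ℕ → ℝ)
    (hk : ∀ a b, 1 ≤ a → a < b → b ≤ N → k a < k b)
    (Δ : Finset ℕ → ℝ)
    (hΔ : ∀ S, Δ S = ∏ l ∈ S, ∏ m ∈ S.filter (fun m => l < m), (k l - k m) ^ 2)
    (τ : ℕ → ℝ → ℝ)
    (hτ : ∀ j x, τ j x = ∑ S ∈ Finset.powersetCard j (Finset.Icc 1 N),
        Δ S * Real.exp (∑ l ∈ S, (-(k l) * x + θ0 l))) :
    ∀ j, 1 ≤ j → j ≤ N - 1 →
      Tendsto (fun x : ℝ => τ (j + 1) x * τ (j - 1) x / (τ j x) ^ 2) atTop (nhds 0) ∧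
      Tendsto (fun x : ℝ => τ (j + 1) x * τ (j - 1) x / (τ j x) ^ 2) atBot (nhds 0) :=
  toda_offdiagonal_vanishing_general N k θ0 hk Δ hΔ τ hτ
end

section
/- (Bilinear Toda equation for Hankel determinants of derivatives.) Let f : ℝ → ℝ be infinitely differentiable, and for n ≥ 1 let τ_n(x) be the determinant of the n×n Hankel matrix whose (a,b)-entry (0 ≤ a,b ≤ n−1) is the (a+b)-th derivative f^{(a+b)}(x); set τ_0 = 1. Then each τ_n is infinitely differentiable and for every n ≥ 1 and every x ∈ ℝ: τ_n(x) τ_n''(x) − (τ_n'(x))² = τ_{n+1}(x) τ_{n−1}(x). -/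
open Matrix

/-- Generalized Hankel-type determinant with row orders `u` and column orders `v`. -/
noncomputable def Gd (f : ℝ → ℝ) {k : ℕ} (u v : Fin k → ℕ) (x : ℝ) : ℝ :=
  Matrix.det (Matrix.of fun a b : Fin k => iteratedDeriv (u a + v b) f x)

theorem Gd_apply (f : ℝ → ℝ) {k : ℕ} (u v : Fin k → ℕ) (x : ℝ) :
    Gd f u v x = ∑ σ : Equiv.Perm (Fin k),
      ((Equiv.Perm.sign σ : ℤ) : ℝ) * ∏ i, iteratedDeriv (u (σ i) + v i) f x := by
  rw [Gd, Matrix.det_apply']; rfl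

theorem top_deriv {f : ℝ → ℝ} (hf : ContDiff ℝ (⊤ : ℕ∞) f) : ContDiff ℝ (⊤ : ℕ∞) (deriv f) := by
  have h : ContDiff ℝ (((⊤ : ℕ∞) : WithTop ℕ∞) + 1) f :=
    hf.of_le (by simp only [← WithTop.coe_one, ← WithTop.coe_add, top_add, le_refl])
  exact (contDiff_succ_iff_deriv.mp h).2.2

theorem iter_contDiff {f : ℝ → ℝ} (hf : ContDiff ℝ (⊤ : ℕ∞) f) (m : ℕ) :
    ContDiff ℝ (⊤ : ℕ∞) (iteratedDeriv m f) := by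
  induction m with
  | zero => simpa using hf
  | succ m ih => rw [iteratedDeriv_succ]; exact top_deriv ih

theorem iter_hasDerivAt {f : ℝ → ℝ} (hf : ContDiff ℝ (⊤ : ℕ∞) f) (m : ℕ) (x : ℝ) :
    HasDerivAt (iteratedDeriv m f) (iteratedDeriv (m + 1) f x) x := by
  rw [iteratedDeriv_succ]
  exact (((iter_contDiff hf m).differentiable (by simp)) x).hasDerivAt

theorem Gd_contDiff {f : ℝ → ℝ} (hf : ContDiff ℝ (⊤ : ℕ∞) f) {k : ℕ} (u v : Fin k → ℕ) :
    ContDiff ℝ (⊤ : ℕ∞) (Gd f u v) := by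
  have : Gd f u v = fun x => ∑ σ : Equiv.Perm (Fin k),
      ((Equiv.Perm.sign σ : ℤ) : ℝ) * ∏ i, iteratedDeriv (u (σ i) + v i) f x :=
    funext fun x => Gd_apply f u v x
  rw [this]
  exact ContDiff.sum fun σ _ =>
    contDiff_const.mul (contDiff_prod fun i _ => iter_contDiff hf _)

theorem Gd_hasDerivAt {f : ℝ → ℝ} (hf : ContDiff ℝ (⊤ : ℕ∞) f) {k : ℕ} (u v : Fin k → ℕ) (x : ℝ) :
    HasDerivAt (Gd f u v)
      (∑ j : Fin k, Gd f u (Function.update v j (v j + 1)) x) x := by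
  classical
  have hrw : Gd f u v = fun y => ∑ σ : Equiv.Perm (Fin k),
      ((Equiv.Perm.sign σ : ℤ) : ℝ) * ∏ i, iteratedDeriv (u (σ i) + v i) f y :=
    funext fun y => Gd_apply f u v y
  rw [hrw]
  have H : HasDerivAt
      (fun y => ∑ σ : Equiv.Perm (Fin k),
        ((Equiv.Perm.sign σ : ℤ) : ℝ) * ∏ i, iteratedDeriv (u (σ i) + v i) f y)
      (∑ σ : Equiv.Perm (Fin k), ((Equiv.Perm.sign σ : ℤ) : ℝ) *
        ∑ j : Fin k, (∏ i ∈ Finset.univ.erase j, iteratedDeriv (u (σ i) + v i) f x) •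
          iteratedDeriv (u (σ j) + v j + 1) f x) x := by
    apply HasDerivAt.fun_sum
    intro σ _
    exact (HasDerivAt.fun_finsetProd fun i _ => iter_hasDerivAt hf (u (σ i) + v i) x).const_mul _
  convert H using 1
  simp_rw [Finset.mul_sum]
  rw [Finset.sum_comm]
  apply Finset.sum_congr rfl
  intro j _
  rw [Gd_apply]
  apply Finset.sum_congr rfl
  intro σ _
  congr 1
  rw [← Finset.mul_prod_erase Finset.univ _ (Finset.mem_univ j), smul_eq_mul, mul_comm]
  congr 1
  · apply Finset.prod_congr rfl
    intro i hi
    rw [Function.update_of_ne (Finset.ne_of_mem_erase hi)]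
  · rw [Function.update_self, ← add_assoc]

theorem Gd_zero_col {f : ℝ → ℝ} {k : ℕ} {u v : Fin k → ℕ} {i j : Fin k}
    (hne : i ≠ j) (h : v i = v j) (x : ℝ) : Gd f u v x = 0 :=
  Matrix.det_zero_of_column_eq hne (fun a => by simp [Matrix.of_apply, h])

theorem Gd_transpose (f : ℝ → ℝ) {k : ℕ} (u v : Fin k → ℕ) (x : ℝ) :
    Gd f u v x = Gd f v u x := by
  rw [Gd, ← Matrix.det_transpose]
  congr 1
  ext a b
  simp [Matrix.transpose_apply, add_comm]

/-- Natural row order 0, 1, ..., k-1. -/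
def cf (k : ℕ) : Fin k → ℕ := fun a => (a : ℕ)

/-- Row order 0, 1, ..., m-1, m+1 (last one shifted). -/
def uf (m : ℕ) : Fin (m + 1) → ℕ := Function.update (cf (m + 1)) (Fin.last m) (m + 1)

theorem sum_updates {f : ℝ → ℝ} {m : ℕ} (u : Fin (m + 1) → ℕ) (x : ℝ) :
    ∑ j : Fin (m + 1), Gd f u (Function.update (cf (m + 1)) j (cf (m + 1) j + 1)) x
      = Gd f u (uf m) x := by
  rw [Finset.sum_eq_single (Fin.last m)]
  · congr 1
  · intro j _ hj
    have hjm : (j : ℕ) < m := Fin.val_lt_last hj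
    have hne : j ≠ (⟨(j : ℕ) + 1, by omega⟩ : Fin (m + 1)) := by
      intro h
      have := congrArg Fin.val h
      simp at this
    refine Gd_zero_col hne ?_ x
    rw [Function.update_self, Function.update_of_ne (Ne.symm hne)]
    simp [cf]
  · simp

theorem deriv1 {f : ℝ → ℝ} (hf : ContDiff ℝ (⊤ : ℕ∞) f) (m : ℕ) (x : ℝ) :
    HasDerivAt (Gd f (cf (m + 1)) (cf (m + 1))) (Gd f (uf m) (cf (m + 1)) x) x := by
  have h := Gd_hasDerivAt hf (cf (m + 1)) (cf (m + 1)) x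
  rw [sum_updates, Gd_transpose f (cf (m + 1)) (uf m) x] at h
  exact h

theorem deriv2 {f : ℝ → ℝ} (hf : ContDiff ℝ (⊤ : ℕ∞) f) (m : ℕ) (x : ℝ) :
    HasDerivAt (Gd f (uf m) (cf (m + 1))) (Gd f (uf m) (uf m) x) x := by
  have h := Gd_hasDerivAt hf (uf m) (cf (m + 1)) x
  rwa [sum_updates] at h

theorem jacobi_ring {R : Type*} [CommRing R] (m : ℕ) (A : Matrix (Fin (m + 2)) (Fin (m + 2)) R) :
    A.det * (det (A.submatrix (⟨m, by omega⟩ : Fin (m + 2)).succAbove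
        (⟨m, by omega⟩ : Fin (m + 2)).succAbove) *
      det (A.submatrix (Fin.last (m + 1)).succAbove (Fin.last (m + 1)).succAbove) -
      det (A.submatrix (⟨m, by omega⟩ : Fin (m + 2)).succAbove (Fin.last (m + 1)).succAbove) *
      det (A.submatrix (Fin.last (m + 1)).succAbove (⟨m, by omega⟩ : Fin (m + 2)).succAbove)) =
    A.det * (A.det * det (A.submatrix (fun k : Fin m => (⟨(k : ℕ), by omega⟩ : Fin (m + 2)))
      (fun k : Fin m => (⟨(k : ℕ), by omega⟩ : Fin (m + 2))))) := by
  classical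
  set i₀ : Fin (m + 2) := ⟨m, by omega⟩ with hi₀
  set i₁ : Fin (m + 2) := Fin.last (m + 1) with hi₁
  set e : Fin m ⊕ Fin 2 ≃ Fin (m + 2) := finSumFinEquiv with he
  have he0 : e (Sum.inr 0) = i₀ := by
    apply Fin.ext
    simp [he, hi₀]
  have he1 : e (Sum.inr 1) = i₁ := by
    apply Fin.ext
    simp [he, hi₁]
  have heL : ∀ k : Fin m, e (Sum.inl k) = (⟨(k : ℕ), by omega⟩ : Fin (m + 2)) := by
    intro k; apply Fin.ext; simp [he]
  set B := adjugate A with hB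
  set E : Matrix (Fin 2) (Fin 2) R := Matrix.of fun p q => B (e (Sum.inr p)) (e (Sum.inr q)) with hE
  set C2 : Matrix (Fin m) (Fin 2) R := Matrix.of fun i p => B (e (Sum.inl i)) (e (Sum.inr p)) with hC2
  set D : Matrix (Fin m ⊕ Fin 2) (Fin m ⊕ Fin 2) R := Matrix.fromBlocks 1 C2 0 E with hD
  have hAB : A * B = A.det • 1 := Matrix.mul_adjugate A
  have h1 : A.submatrix e e * D = Matrix.fromBlocks
      (A.submatrix (e ∘ Sum.inl) (e ∘ Sum.inl)) 0
      (Matrix.of fun p j => A (e (Sum.inr p)) (e (Sum.inl j))) (A.det • 1) := by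
    ext i j
    rcases j with j | q
    · rcases i with i | p <;>
        simp [Matrix.mul_apply, Fintype.sum_sum_type, hD, Matrix.fromBlocks,
          Matrix.one_apply, Finset.sum_ite_eq', mul_ite]
    · have hcol : (A.submatrix e e * D) i (Sum.inr q)
          = ∑ k : Fin m ⊕ Fin 2, A (e i) (e k) * B (e k) (e (Sum.inr q)) := by
        rw [Matrix.mul_apply]
        apply Finset.sum_congr rfl
        intro k _
        rcases k with k | k <;> simp [hD, Matrix.fromBlocks, hE, hC2]
      rw [hcol, Equiv.sum_comp e (fun k' => A (e i) k' * B k' (e (Sum.inr q)))]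
      have : ∑ k', A (e i) k' * B k' (e (Sum.inr q)) = (A * B) (e i) (e (Sum.inr q)) := by
        rw [Matrix.mul_apply]
      rw [this, hAB]
      rcases i with i | p
      · have : e (Sum.inl i) ≠ e (Sum.inr q) := by
          simp [e.injective.ne_iff]
        simp [Matrix.fromBlocks, Matrix.smul_apply, Matrix.one_apply, this]
      · simp [Matrix.fromBlocks, Matrix.smul_apply, Matrix.one_apply,
          e.injective.eq_iff, Sum.inr.injEq]
  have h2 := congrArg Matrix.det h1
  rw [Matrix.det_mul, Matrix.det_submatrix_equiv_self,
    Matrix.det_fromBlocks_zero₂₁, Matrix.det_one, one_mul,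
    Matrix.det_fromBlocks_zero₁₂, Matrix.det_smul, Matrix.det_one, mul_one,
    Fintype.card_fin] at h2
  have hadj : ∀ p q : Fin (m + 2), B p q
      = (-1 : R) ^ ((q : ℕ) + (p : ℕ)) * det (A.submatrix q.succAbove p.succAbove) :=
    fun p q => Matrix.adjugate_fin_succ_eq_det_submatrix A p q
  have hE2 : E.det = det (A.submatrix i₀.succAbove i₀.succAbove) *
      det (A.submatrix i₁.succAbove i₁.succAbove) -
      det (A.submatrix i₀.succAbove i₁.succAbove) *
      det (A.submatrix i₁.succAbove i₀.succAbove) := by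
    rw [Matrix.det_fin_two]
    simp only [hE, Matrix.of_apply, he0, he1, hadj]
    have hv0 : ((i₀ : Fin (m + 2)) : ℕ) = m := rfl
    have hv1 : ((i₁ : Fin (m + 2)) : ℕ) = m + 1 := rfl
    simp only [hv0, hv1]
    rw [Even.neg_one_pow (⟨m, rfl⟩ : Even (m + m)),
      Even.neg_one_pow (⟨m + 1, rfl⟩ : Even ((m + 1) + (m + 1))),
      Odd.neg_one_pow (⟨m, by omega⟩ : Odd ((m + 1) + m)),
      Odd.neg_one_pow (⟨m, by omega⟩ : Odd (m + (m + 1)))]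
    ring
  rw [hE2] at h2
  have hfun : (e ∘ Sum.inl) = fun k : Fin m => (⟨(k : ℕ), by omega⟩ : Fin (m + 2)) :=
    funext heL
  rw [hfun] at h2
  rw [h2]
  ring

theorem jacobi_real (m : ℕ) (A : Matrix (Fin (m + 2)) (Fin (m + 2)) ℝ) :
    det (A.submatrix (⟨m, by omega⟩ : Fin (m + 2)).succAbove
        (⟨m, by omega⟩ : Fin (m + 2)).succAbove) *
      det (A.submatrix (Fin.last (m + 1)).succAbove (Fin.last (m + 1)).succAbove) -
      det (A.submatrix (⟨m, by omega⟩ : Fin (m + 2)).succAbove (Fin.last (m + 1)).succAbove) *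
      det (A.submatrix (Fin.last (m + 1)).succAbove (⟨m, by omega⟩ : Fin (m + 2)).succAbove) =
    A.det * det (A.submatrix (fun k : Fin m => (⟨(k : ℕ), by omega⟩ : Fin (m + 2)))
      (fun k : Fin m => (⟨(k : ℕ), by omega⟩ : Fin (m + 2)))) := by
  classical
  set φ : Polynomial ℝ →+* ℝ := Polynomial.evalRingHom (0 : ℝ) with hφ
  set Ap : Matrix (Fin (m + 2)) (Fin (m + 2)) (Polynomial ℝ) := charmatrix (-A) with hAp
  have hmap : Ap.map φ = A := by
    ext i j
    by_cases h : i = j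
    · subst h; simp [hAp, hφ, charmatrix_apply_eq]
    · simp [hAp, hφ, charmatrix_apply_ne _ _ _ h]
  have hdet : Ap.det ≠ 0 := (Matrix.charpoly_monic (-A)).ne_zero
  have h := jacobi_ring m Ap
  have h2 := mul_left_cancel₀ hdet h
  have h3 := congrArg φ h2
  simp only [map_sub, _root_.map_mul, RingHom.map_det, RingHom.mapMatrix_apply,
    ← Matrix.submatrix_map, hmap] at h3
  exact h3

/-- bilinear Toda equation for Hankel determinants of derivatives:
if f is infinitely differentiable and τ_n(x) = det(f^{(a+b)}(x))_{0≤a,b≤n−1}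
(with τ_0 = 1), then each τ_n is infinitely differentiable and
τ_n τ_n'' − (τ_n')² = τ_{n+1} τ_{n−1} for all n ≥ 1. -/
theorem hankel_bilinear_toda
    (f : ℝ → ℝ) (hf : ContDiff ℝ (⊤ : ℕ∞) f)
    (τ : ℕ → ℝ → ℝ)
    (hτ : ∀ n x, τ n x =
        Matrix.det (Matrix.of fun a b : Fin n => iteratedDeriv ((a : ℕ) + (b : ℕ)) f x)) :
    (∀ n, ContDiff ℝ (⊤ : ℕ∞) (τ n)) ∧
    (∀ x, τ 0 x = 1) ∧
    ∀ n : ℕ, 1 ≤ n → ∀ x : ℝ,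
      τ n x * deriv (deriv (τ n)) x - (deriv (τ n) x) ^ 2 = τ (n + 1) x * τ (n - 1) x := by
  have hτG : ∀ n, τ n = Gd f (cf n) (cf n) := fun n => funext fun x => hτ n x
  refine ⟨fun n => ?_, fun x => ?_, fun n hn x => ?_⟩
  · rw [hτG n]; exact Gd_contDiff hf _ _
  · rw [hτ 0 x]; exact Matrix.det_fin_zero
  · obtain ⟨m, rfl⟩ : ∃ m, n = m + 1 := ⟨n - 1, by omega⟩
    have hd1 : deriv (τ (m + 1)) = fun y => Gd f (uf m) (cf (m + 1)) y := by
      funext y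
      rw [hτG (m + 1)]
      exact (deriv1 hf m y).deriv
    have hd2 : deriv (deriv (τ (m + 1))) x = Gd f (uf m) (uf m) x := by
      rw [hd1]
      exact (deriv2 hf m x).deriv
    have hd1x : deriv (τ (m + 1)) x = Gd f (uf m) (cf (m + 1)) x := by rw [hd1]
    rw [hd2, hd1x, hτG (m + 1)]
    show Gd f (cf (m + 1)) (cf (m + 1)) x * Gd f (uf m) (uf m) x -
      Gd f (uf m) (cf (m + 1)) x ^ 2 = τ (m + 2) x * τ m x
    set A : Matrix (Fin (m + 2)) (Fin (m + 2)) ℝ :=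
      Matrix.of fun a b : Fin (m + 2) => iteratedDeriv ((a : ℕ) + (b : ℕ)) f x with hA
    have h_sub : ∀ (s t : Fin (m + 1) → Fin (m + 2)) (us vs : Fin (m + 1) → ℕ),
        (∀ a, (s a : ℕ) = us a) → (∀ a, (t a : ℕ) = vs a) →
        (A.submatrix s t).det = Gd f us vs x := by
      intro s t us vs hs ht
      rw [Gd]
      congr 1
      ext a b
      simp only [Matrix.submatrix_apply, hA, Matrix.of_apply, hs a, ht b]
    have hvL : ∀ a : Fin (m + 1), ((Fin.last (m + 1)).succAbove a : ℕ) = cf (m + 1) a := by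
      intro a
      rw [Fin.succAbove_last]
      rfl
    have hv0 : ∀ a : Fin (m + 1),
        (((⟨m, by omega⟩ : Fin (m + 2))).succAbove a : ℕ) = uf m a := by
      intro a
      by_cases h : a = Fin.last m
      · subst h
        rw [Fin.succAbove_of_le_castSucc _ _ (by simp [Fin.le_def])]
        simp [uf, Fin.val_last]
      · have hlt : (a : ℕ) < m := Fin.val_lt_last h
        rw [Fin.succAbove_of_castSucc_lt _ _ (by simp [Fin.lt_def]; omega)]
        simp [uf, cf, Function.update_of_ne h]
    have jac := jacobi_real m A
    rw [h_sub _ _ _ _ hv0 hv0, h_sub _ _ _ _ hvL hvL, h_sub _ _ _ _ hv0 hvL,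
      h_sub _ _ _ _ hvL hv0, Gd_transpose f (cf (m + 1)) (uf m) x] at jac
    have hdetA : A.det = τ (m + 2) x := (hτ (m + 2) x).symm
    have hA11 : det (A.submatrix (fun k : Fin m => (⟨(k : ℕ), by omega⟩ : Fin (m + 2)))
        (fun k : Fin m => (⟨(k : ℕ), by omega⟩ : Fin (m + 2)))) = τ m x := by
      rw [hτ m x]
      congr 1
    rw [hdetA, hA11] at jac
    linear_combination jac
end

section
/- (Jacobi / Desnanot–Jacobi determinant identity.) Let R be a commutative ring, n ≥ 2, and let D be an n×n matrix over R. Denote by D(i|j) the (n−1)×(n−1) matrix obtained from D by deleting row i and column j, and by D(n−1,n|n−1,n) the (n−2)×(n−2) matrix obtained by deleting rows n−1 and n and columns n−1 and n. Then det D(n−1|n−1) · det D(n|n) − det D(n−1|n) · det D(n|n−1) = det D(n−1,n|n−1,n) · det D. -/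
/-!
Write `D` in block form with respect to `Fin m ⊕ Fin 2`. Multiplying `D` on the right by the
matrix `[[1, adj₁₂], [0, adj₂₂]]` built from the last two columns of `adj D` gives, because
`D * adj D = det D • 1`, the block lower-triangular matrix `[[D₁₁, 0], [D₂₁, det D • 1]]`. Taking
determinants, `det D * det adj₂₂ = det D ^ 2 * det D₁₁`; for the generic matrix `det D ≠ 0` may
be cancelled, and the resulting identity `det adj₂₂ = det D * det D₁₁` (Jacobi's theorem on minors
of the adjugate) specializes to every commutative ring. Finally, the entries of `adj₂₂` are the
signed minors `D(i|j)`, and the signs cancel in the `2 × 2` determinant.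
-/

namespace Matrix

variable {m n R : Type*} [Fintype m] [Fintype n] [DecidableEq m] [DecidableEq n] [CommRing R]

theorem mul_fromBlocks_one_adjugate (A : Matrix (m ⊕ n) (m ⊕ n) R) :
    A * fromBlocks 1 A.adjugate.toBlocks₁₂ 0 A.adjugate.toBlocks₂₂ =
      fromBlocks A.toBlocks₁₁ 0 A.toBlocks₂₁ (A.det • 1) := by
  ext i (j | j)
  · rcases i with i | i <;>
      simp [mul_apply, Fintype.sum_sum_type, one_apply, toBlocks₁₁, toBlocks₂₁]
  · have h := congrFun (congrFun (mul_adjugate A) i) (.inr j)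
    rw [mul_apply, Fintype.sum_sum_type] at h
    rcases i with i | i <;>
      simpa [mul_apply, Fintype.sum_sum_type, one_apply, toBlocks₁₂, toBlocks₂₂] using h

theorem det_mul_det_toBlocks₂₂_adjugate (A : Matrix (m ⊕ n) (m ⊕ n) R) :
    A.det * A.adjugate.toBlocks₂₂.det = A.det ^ Fintype.card n * A.toBlocks₁₁.det := by
  have h := congrArg det (mul_fromBlocks_one_adjugate A)
  rwa [det_mul, det_fromBlocks_zero₂₁, det_fromBlocks_zero₁₂, det_one, one_mul, det_smul, det_one,
    mul_one, mul_comm (A.toBlocks₁₁.det)] at h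

theorem det_toBlocks₂₂_adjugate [Nonempty n] (A : Matrix (m ⊕ n) (m ⊕ n) R) :
    A.adjugate.toBlocks₂₂.det = A.det ^ (Fintype.card n - 1) * A.toBlocks₁₁.det := by
  let X := mvPolynomialX (m ⊕ n) (m ⊕ n) ℤ
  suffices X.adjugate.toBlocks₂₂.det = X.det ^ (Fintype.card n - 1) * X.toBlocks₁₁.det by
    have h := congrArg (MvPolynomial.aeval fun p : (m ⊕ n) × (m ⊕ n) => A p.1 p.2) this
    rw [← mvPolynomialX_mapMatrix_aeval ℤ A, ← AlgHom.map_adjugate]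
    simp only [map_mul, map_pow, AlgHom.map_det] at h
    exact h
  apply mul_left_cancel₀ (det_mvPolynomialX_ne_zero (m ⊕ n) ℤ)
  rw [det_mul_det_toBlocks₂₂_adjugate, ← mul_assoc, ← pow_succ',
    Nat.sub_add_cancel Fintype.card_pos]

theorem adjugate_mul_adjugate_sub_adjugate_mul_adjugate {k : ℕ}
    (A : Matrix (Fin (k + 1)) (Fin (k + 1)) R) (i j : Fin (k + 1)) :
    A.adjugate i i * A.adjugate j j - A.adjugate i j * A.adjugate j i =
      (A.submatrix i.succAbove i.succAbove).det * (A.submatrix j.succAbove j.succAbove).det -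
        (A.submatrix i.succAbove j.succAbove).det * (A.submatrix j.succAbove i.succAbove).det := by
  simp only [adjugate_fin_succ_eq_det_submatrix]
  have sign_mul_sign (a b : ℕ) : (-1 : R) ^ (a + b) * (-1) ^ (b + a) = 1 := by
    rw [← pow_add]; exact Even.neg_one_pow ⟨a + b, by omega⟩
  linear_combination ((A.submatrix i.succAbove i.succAbove).det *
      (A.submatrix j.succAbove j.succAbove).det -
      (A.submatrix i.succAbove j.succAbove).det * (A.submatrix j.succAbove i.succAbove).det) *
    sign_mul_sign i j

end Matrix

open Matrix in
/-- Desnanot–Jacobi determinant identity: for an n×n matrix D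
(n = m+2 ≥ 2) over a commutative ring,
det D(n−1|n−1) · det D(n|n) − det D(n−1|n) · det D(n|n−1)
  = det D(n−1,n|n−1,n) · det D,
where D(i|j) deletes row i and column j, and D(n−1,n|n−1,n) deletes the last
two rows and columns. (Rows/columns n−1 and n are the indices m and m+1 of
Fin (m+2); deletion of a single row/column is via `Fin.succAbove`.) -/
theorem desnanot_jacobi
    (R : Type*) [CommRing R] (m : ℕ)
    (D : Matrix (Fin (m + 2)) (Fin (m + 2)) R) :
    (D.submatrix (Fin.succAbove ⟨m, by omega⟩) (Fin.succAbove ⟨m, by omega⟩)).det *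
        (D.submatrix (Fin.succAbove ⟨m + 1, by omega⟩) (Fin.succAbove ⟨m + 1, by omega⟩)).det -
      (D.submatrix (Fin.succAbove ⟨m, by omega⟩) (Fin.succAbove ⟨m + 1, by omega⟩)).det *
        (D.submatrix (Fin.succAbove ⟨m + 1, by omega⟩) (Fin.succAbove ⟨m, by omega⟩)).det
    = (D.submatrix (fun a : Fin m => (Fin.castLE (by omega) a : Fin (m + 2)))
        (fun b : Fin m => (Fin.castLE (by omega) b : Fin (m + 2)))).det * D.det := by
  let e : Fin m ⊕ Fin 2 ≃ Fin (m + 2) := finSumFinEquiv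
  let k : Fin (m + 2) := ⟨m, by omega⟩
  let l : Fin (m + 2) := ⟨m + 1, by omega⟩
  -- `e` sends `inr 0, inr 1` to `k, l` and `inl a` to `Fin.castLE _ a`, definitionally.
  calc _ = D.adjugate k k * D.adjugate l l - D.adjugate k l * D.adjugate l k :=
        (adjugate_mul_adjugate_sub_adjugate_mul_adjugate D k l).symm
    _ = (D.submatrix e e).adjugate.toBlocks₂₂.det := by
        rw [adjugate_submatrix_equiv_self, det_fin_two]; rfl
    _ = D.det ^ (2 - 1) * (D.submatrix e e).toBlocks₁₁.det := by
        rw [det_toBlocks₂₂_adjugate, det_submatrix_equiv_self, Fintype.card_fin]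
    _ = _ := by rw [pow_one, mul_comm]; rfl
end

section
/- (One-soliton solution.) For all (x,y,t) ∈ ℝ³, 2 ∂²/∂x² [ log( e^{θ_1(x,y,t)} + e^{θ_2(x,y,t)} ) ] = (1/2)(k_1 − k_2)² · (1 / cosh²( (θ_1(x,y,t) − θ_2(x,y,t))/2 )). -/
/-!
Writing `log (e^u + e^v) = (u + v)/2 + log 2 + log cosh ((u - v)/2)` splits `log (e^θ₁ + e^θ₂)` into a
part affine in `x` and `log cosh` of an affine function of slope `(k₂ - k₁)/2`. The affine part is
killed by two derivatives, and `(log cosh)'' = tanh' = sech²`.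
-/

open Real

theorem Real.log_exp_add_exp (u v : ℝ) :
    log (exp u + exp v) = (u + v) / 2 + log 2 + log (cosh ((u - v) / 2)) := by
  have hsplit : exp u + exp v = exp ((u + v) / 2) * (2 * cosh ((u - v) / 2)) := by
    rw [cosh_eq, mul_div_cancel₀ _ two_ne_zero, mul_add, ← exp_add, ← exp_add]
    ring_nf
  rw [hsplit, log_mul (exp_pos _).ne' (by positivity), log_exp,
    log_mul two_ne_zero (cosh_pos _).ne', add_assoc]

theorem Real.hasDerivAt_tanh (x : ℝ) : HasDerivAt tanh (1 / cosh x ^ 2) x := by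
  have h : HasDerivAt (fun y => sinh y / cosh y)
      ((cosh x * cosh x - sinh x * sinh x) / cosh x ^ 2) x :=
    (hasDerivAt_sinh x).div (hasDerivAt_cosh x) (cosh_pos x).ne'
  rw [show tanh = fun y => sinh y / cosh y from funext tanh_eq_sinh_div_cosh,
    ← cosh_sq_sub_sinh_sq x]
  convert h using 2
  ring

theorem Real.hasDerivAt_log_cosh (x : ℝ) : HasDerivAt (fun x => log (cosh x)) (tanh x) x := by
  rw [tanh_eq_sinh_div_cosh]
  exact (hasDerivAt_cosh x).log (cosh_pos x).ne'

theorem Real.iteratedDeriv_two_affine_add_log_cosh (p q m n x : ℝ) :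
    iteratedDeriv 2 (fun x => p * x + q + log (cosh (m * x + n))) x
      = m ^ 2 / cosh (m * x + n) ^ 2 := by
  have hinner (x : ℝ) : HasDerivAt (fun x => m * x + n) m x := by
    simpa using ((hasDerivAt_id x).const_mul m).add_const n
  have hderiv : deriv (fun x => p * x + q + log (cosh (m * x + n)))
      = fun x => p + tanh (m * x + n) * m := by
    funext x
    have hlin : HasDerivAt (fun x => p * x + q) p x := by
      simpa using ((hasDerivAt_id x).const_mul p).add_const q
    exact (hlin.add ((hasDerivAt_log_cosh _).comp x (hinner x))).deriv
  rw [iteratedDeriv_succ, iteratedDeriv_one, hderiv]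
  have h : HasDerivAt (fun x => p + tanh (m * x + n) * m) (1 / cosh (m * x + n) ^ 2 * m * m) x :=
    (((hasDerivAt_tanh _).comp x (hinner x)).mul_const m).const_add p
  rw [h.deriv]
  ring

/-- one-soliton solution: with θ_j(x,y,t) = −k_j x + k_j² y − k_j³ t + θ_j⁰,
2 ∂²/∂x² log(e^{θ₁} + e^{θ₂}) = ½ (k₁ − k₂)² sech²((θ₁ − θ₂)/2). -/
theorem one_soliton_solution
    (k1 k2 θ10 θ20 : ℝ)
    (θ1 θ2 : ℝ → ℝ → ℝ → ℝ)
    (h1 : ∀ x y t, θ1 x y t = -k1 * x + k1 ^ 2 * y - k1 ^ 3 * t + θ10)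
    (h2 : ∀ x y t, θ2 x y t = -k2 * x + k2 ^ 2 * y - k2 ^ 3 * t + θ20) :
    ∀ x y t : ℝ,
      2 * iteratedDeriv 2
          (fun x' => Real.log (Real.exp (θ1 x' y t) + Real.exp (θ2 x' y t))) x
        = (1 / 2) * (k1 - k2) ^ 2 *
            (1 / (Real.cosh ((θ1 x y t - θ2 x y t) / 2)) ^ 2) := by
  intro x y t
  set m := (k2 - k1) / 2
  set n := ((k1 ^ 2 - k2 ^ 2) * y - (k1 ^ 3 - k2 ^ 3) * t + θ10 - θ20) / 2
  have hdiff (x' : ℝ) : (θ1 x' y t - θ2 x' y t) / 2 = m * x' + n := by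
    rw [h1, h2]; ring
  have hpotential : (fun x' => log (exp (θ1 x' y t) + exp (θ2 x' y t)))
      = fun x' => -(k1 + k2) / 2 * x'
          + (((k1 ^ 2 + k2 ^ 2) * y - (k1 ^ 3 + k2 ^ 3) * t + θ10 + θ20) / 2 + log 2)
          + log (cosh (m * x' + n)) := by
    funext x'
    rw [log_exp_add_exp, hdiff, h1, h2]
    ring
  rw [hpotential, iteratedDeriv_two_affine_add_log_cosh, hdiff]
  ring
end

section
/- (Degeneration of the ordinary 2-soliton to a resonant soliton.) Suppose k_2 = k_3. Then for all (x,y,t): τ_2 = e^{θ_1+θ_2+θ_4} · [ (k_1−k_3) Δ e^{−θ_4} + (k_1−k_4) e^{−θ_2} + (k_2−k_4) e^{−θ_1} ], where Δ = exp(θ_3^0 − θ_2^0). Consequently, if in addition k_1 < k_2 = k_3 < k_4, then −τ_2 > 0 everywhere and 2 ∂²/∂x² [ log(−τ_2) ] = 2 ∂²/∂x² [ log( (k_3−k_1) Δ e^{−θ_4} + (k_4−k_1) e^{−θ_2} + (k_4−k_2) e^{−θ_1} ) ], i.e. the solution coincides with the one generated by a sum of three exponentials with positive coefficients. -/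
/-!
When `k₂ = k₃` the phases `θ₂` and `θ₃` differ only by the constant `θ₃⁰ − θ₂⁰`, so the term
`(k₂ − k₃) e^{θ₂+θ₃}` vanishes and the remaining three exponentials share the factor
`e^{θ₁+θ₂+θ₄}`. For `k₁ < k₂ = k₃ < k₄` the cofactor of `−τ₂` has positive coefficients, and the
prefactor contributes only a term affine in `x` to `log (−τ₂)`, which `∂²/∂x²` kills.
-/

open Real

lemma iteratedDeriv_two_affine_add {g : ℝ → ℝ} (hg : Differentiable ℝ g) (m b : ℝ) :
    iteratedDeriv 2 (fun x => m * x + b + g x) = iteratedDeriv 2 g := by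
  have hderiv : deriv (fun x => m * x + b + g x) = fun x => m + deriv g x := by
    funext x
    have h := (((hasDerivAt_id' x).const_mul m).add_const b).add (hg x).hasDerivAt
    rw [mul_one] at h
    exact h.deriv
  rw [iteratedDeriv_succ, iteratedDeriv_one, iteratedDeriv_succ, iteratedDeriv_one, hderiv]
  exact funext fun x => deriv_const_add m

lemma iteratedDeriv_two_log_exp_affine_mul {f : ℝ → ℝ} (hf : Differentiable ℝ f)
    (hpos : ∀ x, 0 < f x) (m b : ℝ) :
    iteratedDeriv 2 (fun x => log (exp (m * x + b) * f x)) = iteratedDeriv 2 (fun x => log (f x)) := by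
  have hlog : (fun x => log (exp (m * x + b) * f x)) = fun x => m * x + b + log (f x) :=
    funext fun x => by rw [log_mul (exp_ne_zero _) (hpos x).ne', log_exp]
  rw [hlog, iteratedDeriv_two_affine_add (hf.log fun x => (hpos x).ne')]

lemma resonant_two_soliton_factorization (k₁ k₃ k₄ θ₁ θ₂ θ₄ c : ℝ) :
    (k₁ - k₃) * exp (θ₁ + (θ₂ + c)) + (k₁ - k₄) * exp (θ₁ + θ₄) +
        (k₃ - k₃) * exp (θ₂ + (θ₂ + c)) + (k₃ - k₄) * exp (θ₂ + θ₄) =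
      exp (θ₁ + θ₂ + θ₄) *
        ((k₁ - k₃) * exp c * exp (-θ₄) + (k₁ - k₄) * exp (-θ₂) + (k₃ - k₄) * exp (-θ₁)) := by
  simp only [exp_add, exp_neg]
  field_simp
  ring

/-- degeneration of the ordinary 2-soliton to a resonant soliton:
if k₂ = k₃ then the ordinary 2-soliton tau-function
τ₂ = (k₁−k₃)e^{θ₁+θ₃} + (k₁−k₄)e^{θ₁+θ₄} + (k₂−k₃)e^{θ₂+θ₃} + (k₂−k₄)e^{θ₂+θ₄}
factors as τ₂ = e^{θ₁+θ₂+θ₄}[(k₁−k₃)Δ e^{−θ₄} + (k₁−k₄)e^{−θ₂} + (k₂−k₄)e^{−θ₁}]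
with Δ = exp(θ₃⁰−θ₂⁰); and if moreover k₁ < k₂ = k₃ < k₄ then −τ₂ > 0 everywhere
and 2 ∂²/∂x² log(−τ₂) = 2 ∂²/∂x² log((k₃−k₁)Δe^{−θ₄} + (k₄−k₁)e^{−θ₂} + (k₄−k₂)e^{−θ₁}). -/
theorem two_soliton_resonant_degeneration
    (k1 k2 k3 k4 θ10 θ20 θ30 θ40 : ℝ)
    (θ1 θ2 θ3 θ4 : ℝ → ℝ → ℝ → ℝ)
    (h1 : ∀ x y t, θ1 x y t = -k1 * x + k1 ^ 2 * y - k1 ^ 3 * t + θ10)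
    (h2 : ∀ x y t, θ2 x y t = -k2 * x + k2 ^ 2 * y - k2 ^ 3 * t + θ20)
    (h3 : ∀ x y t, θ3 x y t = -k3 * x + k3 ^ 2 * y - k3 ^ 3 * t + θ30)
    (h4 : ∀ x y t, θ4 x y t = -k4 * x + k4 ^ 2 * y - k4 ^ 3 * t + θ40)
    (τ2 : ℝ → ℝ → ℝ → ℝ)
    (hτ2 : ∀ x y t, τ2 x y t =
        (k1 - k3) * Real.exp (θ1 x y t + θ3 x y t) +
        (k1 - k4) * Real.exp (θ1 x y t + θ4 x y t) +
        (k2 - k3) * Real.exp (θ2 x y t + θ3 x y t) +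
        (k2 - k4) * Real.exp (θ2 x y t + θ4 x y t))
    (hk23 : k2 = k3) :
    (∀ x y t : ℝ, τ2 x y t =
        Real.exp (θ1 x y t + θ2 x y t + θ4 x y t) *
          ((k1 - k3) * Real.exp (θ30 - θ20) * Real.exp (-(θ4 x y t)) +
           (k1 - k4) * Real.exp (-(θ2 x y t)) +
           (k2 - k4) * Real.exp (-(θ1 x y t)))) ∧
    (k1 < k2 → k3 < k4 →
      (∀ x y t : ℝ, 0 < -τ2 x y t) ∧
      (∀ x y t : ℝ,
        2 * iteratedDeriv 2 (fun x' => Real.log (-τ2 x' y t)) x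
          = 2 * iteratedDeriv 2 (fun x' => Real.log
              ((k3 - k1) * Real.exp (θ30 - θ20) * Real.exp (-(θ4 x' y t)) +
               (k4 - k1) * Real.exp (-(θ2 x' y t)) +
               (k4 - k2) * Real.exp (-(θ1 x' y t)))) x)) := by
  subst hk23
  have hθ3 : ∀ x y t, θ3 x y t = θ2 x y t + (θ30 - θ20) := fun x y t => by rw [h2, h3]; ring
  have hfactor : ∀ x y t, τ2 x y t = exp (θ1 x y t + θ2 x y t + θ4 x y t) *
      ((k1 - k2) * exp (θ30 - θ20) * exp (-θ4 x y t) + (k1 - k4) * exp (-θ2 x y t) +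
        (k2 - k4) * exp (-θ1 x y t)) := fun x y t => by
    rw [hτ2, hθ3]; exact resonant_two_soliton_factorization ..
  refine ⟨hfactor, fun hk12 hk24 => ?_⟩
  set F : ℝ → ℝ → ℝ → ℝ := fun x y t =>
    (k2 - k1) * exp (θ30 - θ20) * exp (-θ4 x y t) + (k4 - k1) * exp (-θ2 x y t) +
      (k4 - k2) * exp (-θ1 x y t) with hF
  have hFpos : ∀ x y t, 0 < F x y t := fun x y t => by
    have := sub_pos.2 hk12; have := sub_pos.2 hk24; have := sub_pos.2 (hk12.trans hk24)
    positivity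
  have hneg : ∀ x y t, -τ2 x y t = exp (θ1 x y t + θ2 x y t + θ4 x y t) * F x y t :=
    fun x y t => by rw [hfactor]; ring
  refine ⟨fun x y t => hneg x y t ▸ mul_pos (exp_pos _) (hFpos x y t), fun x y t => ?_⟩
  have hphase : ∀ x', θ1 x' y t + θ2 x' y t + θ4 x' y t = -(k1 + k2 + k4) * x' +
      ((k1 ^ 2 + k2 ^ 2 + k4 ^ 2) * y - (k1 ^ 3 + k2 ^ 3 + k4 ^ 3) * t + (θ10 + θ20 + θ40)) :=
    fun x' => by rw [h1, h2, h4]; ring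
  have hFdiff : Differentiable ℝ (F · y t) := by simp only [hF, h1, h2, h4]; fun_prop
  simp only [hneg, hphase]
  rw [iteratedDeriv_two_log_exp_affine_mul hFdiff (hFpos · y t)]
end
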